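/- arXiv:1808.05731 — 7 statements merged into one kernel-verified Lean document; each statement's English description precedes it below -/
import Mathlib

section
/- Let ε > 0 and let φ be a real number with 0 ≤ φ < 1 − ε. Let c_1, …, c_k be any k distinct columns of the matrix A_n(φ). Then the Euclidean norm of the orthogonal projection of c_k onto the orthogonal complement of the span of c_1, …, c_{k−1} is at least (ε^n / √(n!))^k. -/
open Finset

/-- Number of inversions of a permutation of `Fin n`. -/
def numInv {n : ℕ} (τ : Equiv.Perm (Fin n)) : ℕ :=
  (Finset.univ.filter fun p : Fin n × Fin n => p.1 < p.2 ∧ τ p.2 < τ p.1).card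

/-- Kendall-Tau distance between two permutations of `Fin n`. -/
def dKT {n : ℕ} (π π' : Equiv.Perm (Fin n)) : ℕ :=
  (Finset.univ.filter fun p : Fin n × Fin n =>
    p.1 < p.2 ∧ ¬((π p.1 < π p.2) ↔ (π' p.1 < π' p.2))).card

/-- The Mallows model probability of `σ`, with scaling parameter `φ` and center `c`. -/
noncomputable def mallows {n : ℕ} (φ : ℝ) (c : Equiv.Perm (Fin n)) (σ : Equiv.Perm (Fin n)) : ℝ :=
  φ ^ dKT c σ / ∑ τ : Equiv.Perm (Fin n), φ ^ dKT c τ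

/-- Total variation distance. -/
noncomputable def dTV {n : ℕ} (P Q : Equiv.Perm (Fin n) → ℝ) : ℝ :=
  (∑ σ : Equiv.Perm (Fin n), |P σ - Q σ|) / 2

/-- The column of the matrix `A_n(φ)` indexed by the permutation `σ`, viewed as a vector
in Euclidean space: its entry at row `π` is `φ ^ I(πσ⁻¹)`. -/
noncomputable def colA {n : ℕ} (φ : ℝ) (σ : Equiv.Perm (Fin n)) :
    EuclideanSpace ℝ (Equiv.Perm (Fin n)) :=
  WithLp.toLp 2 (fun π => φ ^ numInv (π * σ⁻¹))

/-!
Encode a permutation `π` by its comparison vector, the Booleans `[π a < π b]` for `a < b`. Then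
`I(πτ⁻¹)` is the Hamming distance between the comparison vectors of `π` and `τ`, so, writing `xᵢ`
for the comparison vector of `σᵢ`, the entries of `A_n(φ)` in the rows and columns `σ₁, …, σₖ` form
the kernel matrix `K = (φ ^ d_H(xᵢ, xⱼ))`. This is the Hadamard product over the coordinates `p` of
the matrices `(if xᵢ p = xⱼ p then 1 else φ)`, each of which dominates `(1 - φ) • [xᵢ p = xⱼ p]` in
the Loewner order. Some set `s` of at most `k - 1` coordinates already separates the `k` points, so
the Schur product theorem gives `K ⪰ (1 - φ) ^ |s| • 1`. Restricting `c_{i₀} - w`, for `w` in the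
span of the other columns, to the rows `σ₁, …, σₖ` and pairing it with its coefficient vector then
gives `‖c_{i₀} - w‖ ≥ (1 - φ) ^ |s| ≥ ε ^ (n k)`, which is more than claimed.
-/

open Matrix

section AgreementKernel

variable {β ι α : Type*} [DecidableEq α]

theorem posSemidef_of_eq_indicator [Fintype β] {γ : Type*} [DecidableEq γ] (g : β → γ) :
    (of fun i j => if g i = g j then (1 : ℝ) else 0).PosSemidef := by
  have hsum : (of fun i j => if g i = g j then (1 : ℝ) else 0) =
      ∑ v ∈ univ.image g, vecMulVec (fun i => if g i = v then 1 else 0)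
        (star fun i => if g i = v then 1 else 0) := by
    ext i j
    simp only [of_apply, Matrix.sum_apply, vecMulVec_apply, star_trivial, mul_ite, mul_one,
      mul_zero]
    rw [sum_ite_eq]
    simp
  rw [hsum]
  exact posSemidef_sum _ fun v _ => posSemidef_vecMulVec_self_star _

/-- At `φ = 0` this is the indicator matrix of agreement on all coordinates in `t`. -/
def agreementKernel (φ : ℝ) (x : β → ι → α) (t : Finset ι) : Matrix β β ℝ :=
  of fun i j => ∏ p ∈ t, if x i p = x j p then 1 else φ

variable (x : β → ι → α)

theorem posSemidef_agreementKernel_zero [Fintype β] (t : Finset ι) :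
    (agreementKernel 0 x t).PosSemidef := by
  convert posSemidef_of_eq_indicator fun i (p : t) => x i p using 3 with i j
  simp only [agreementKernel, prod_boole, funext_iff, Subtype.forall]

theorem agreementKernel_insert [DecidableEq ι] (φ : ℝ) {p : ι} {t : Finset ι} (hp : p ∉ t) :
    agreementKernel φ x (insert p t) = agreementKernel φ x {p} ⊙ agreementKernel φ x t := by
  ext i j
  simp [agreementKernel, prod_insert hp]

theorem posSemidef_agreementKernel_sub_pow_smul [Fintype β] {φ : ℝ} (hφ0 : 0 ≤ φ) (hφ1 : φ ≤ 1)
    (t : Finset ι) :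
    (agreementKernel φ x t - (1 - φ) ^ #t • agreementKernel 0 x t).PosSemidef := by
  classical
  induction t using Finset.induction_on with
  | empty =>
    convert PosSemidef.zero using 1
    ext i j
    simp [agreementKernel]
  | @insert p t hp ih =>
    have hP : (agreementKernel φ x t).PosSemidef := by
      simpa using ih.add
        ((posSemidef_agreementKernel_zero x t).smul (pow_nonneg (sub_nonneg.2 hφ1) #t))
    have hconst : (of fun (_ _ : β) => (1 : ℝ)).PosSemidef := by
      simpa using posSemidef_of_eq_indicator fun _ : β => ()
    have hsingle : agreementKernel φ x {p} - (1 - φ) • agreementKernel 0 x {p} =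
        φ • of fun _ _ => 1 := by
      ext i j
      by_cases h : x i p = x j p <;> simp [agreementKernel, h]
    have hsplit : agreementKernel φ x (insert p t) -
          (1 - φ) ^ #(insert p t) • agreementKernel 0 x (insert p t) =
        (agreementKernel φ x {p} - (1 - φ) • agreementKernel 0 x {p}) ⊙ agreementKernel φ x t +
          ((1 - φ) • agreementKernel 0 x {p}) ⊙
            (agreementKernel φ x t - (1 - φ) ^ #t • agreementKernel 0 x t) := by
      rw [agreementKernel_insert x φ hp, agreementKernel_insert x 0 hp, card_insert_of_notMem hp]
      ext i j
      simp only [Matrix.sub_apply, Matrix.add_apply, hadamard_apply, Matrix.smul_apply,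
        smul_eq_mul]
      ring
    rw [hsplit, hsingle]
    exact ((hconst.smul hφ0).hadamard hP).add
      (((posSemidef_agreementKernel_zero x {p}).smul (sub_nonneg.2 hφ1)).hadamard ih)

theorem posSemidef_agreementKernel [Fintype β] {φ : ℝ} (hφ0 : 0 ≤ φ) (hφ1 : φ ≤ 1)
    (t : Finset ι) : (agreementKernel φ x t).PosSemidef := by
  simpa using (posSemidef_agreementKernel_sub_pow_smul x hφ0 hφ1 t).add
    ((posSemidef_agreementKernel_zero x t).smul (pow_nonneg (sub_nonneg.2 hφ1) #t))

theorem posSemidef_agreementKernel_univ_sub_pow_smul_one [Fintype β] [DecidableEq β] [Fintype ι]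
    [DecidableEq ι] {φ : ℝ} (hφ0 : 0 ≤ φ) (hφ1 : φ ≤ 1) {s : Finset ι}
    (hs : ∀ i j, (∀ p ∈ s, x i p = x j p) → i = j) :
    (agreementKernel φ x univ - (1 - φ) ^ #s • 1).PosSemidef := by
  have hsplit : agreementKernel φ x univ = agreementKernel φ x s ⊙ agreementKernel φ x sᶜ := by
    ext i j
    exact (prod_mul_prod_compl s _).symm
  have hsep : agreementKernel 0 x s = 1 := by
    ext i j
    by_cases h : i = j
    · simp [agreementKernel, h, one_apply]
    · simp only [agreementKernel, of_apply, prod_boole, one_apply_ne h]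
      exact if_neg (mt (hs i j) h)
  have hdiag : (1 : Matrix β β ℝ) ⊙ agreementKernel φ x sᶜ = 1 :=
    one_hadamard_eq_one_iff.2 <| funext fun i => by simp [agreementKernel]
  have hfactor : agreementKernel φ x univ - (1 - φ) ^ #s • 1 =
      (agreementKernel φ x s - (1 - φ) ^ #s • agreementKernel 0 x s) ⊙
        agreementKernel φ x sᶜ := by
    rw [hsep, hsplit]
    conv_lhs => rw [← hdiag]
    ext i j
    simp only [Matrix.sub_apply, hadamard_apply, Matrix.smul_apply, smul_eq_mul]
    ring
  rw [hfactor]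
  exact (posSemidef_agreementKernel_sub_pow_smul x hφ0 hφ1 s).hadamard
    (posSemidef_agreementKernel x hφ0 hφ1 sᶜ)

theorem agreementKernel_univ_apply [Fintype ι] (φ : ℝ) (i j : β) :
    agreementKernel φ x univ i j = φ ^ hammingDist (x i) (x j) := by
  simp [agreementKernel, prod_ite, hammingDist]

end AgreementKernel

theorem exists_separating_finset {β ι α : Type*} [DecidableEq β] [DecidableEq ι] [DecidableEq α]
    (x : β → ι → α) (T : Finset β) (hx : Set.InjOn x T) :
    ∃ s : Finset ι, #s ≤ #T - 1 ∧ ∀ i ∈ T, ∀ j ∈ T, (∀ p ∈ s, x i p = x j p) → i = j := by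
  induction T using Finset.strongInduction with
  | _ T ih =>
  by_cases hT : ∀ i ∈ T, ∀ j ∈ T, i = j
  · exact ⟨∅, by simp, fun i hi j hj _ => hT i hi j hj⟩
  push Not at hT
  obtain ⟨i, hi, j, hj, hij⟩ := hT
  obtain ⟨p, hp⟩ : ∃ p, x i p ≠ x j p := Function.ne_iff.1 fun h => hij (hx hi hj h)
  set T₁ := {a ∈ T | x a p = x i p}
  set T₂ := {a ∈ T | x a p ≠ x i p}
  obtain ⟨s₁, hs₁, hsep₁⟩ :=
    ih T₁ (filter_ssubset.2 ⟨j, hj, Ne.symm hp⟩) (hx.mono (filter_subset _ _))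
  obtain ⟨s₂, hs₂, hsep₂⟩ :=
    ih T₂ (filter_ssubset.2 ⟨i, hi, by simp⟩) (hx.mono (filter_subset _ _))
  refine ⟨insert p (s₁ ∪ s₂), ?_, fun a ha b hb hab => ?_⟩
  · have hcard : #T₁ + #T₂ = #T := card_filter_add_card_filter_not _
    have h₁ : 0 < #T₁ := card_pos.2 ⟨i, mem_filter.2 ⟨hi, rfl⟩⟩
    have h₂ : 0 < #T₂ := card_pos.2 ⟨j, mem_filter.2 ⟨hj, Ne.symm hp⟩⟩
    have := (card_insert_le p (s₁ ∪ s₂)).trans (Nat.succ_le_succ (card_union_le s₁ s₂))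
    omega
  · rw [forall_mem_insert, forall_mem_union] at hab
    obtain ⟨habp, hab₁, hab₂⟩ := hab
    by_cases ha' : x a p = x i p
    · exact hsep₁ a (mem_filter.2 ⟨ha, ha'⟩) b (mem_filter.2 ⟨hb, habp ▸ ha'⟩) hab₁
    · exact hsep₂ a (mem_filter.2 ⟨ha, ha'⟩) b (mem_filter.2 ⟨hb, habp ▸ ha'⟩) hab₂

section KendallTau

variable {n : ℕ}

def comparisonVector (π : Equiv.Perm (Fin n)) (p : Fin n × Fin n) : Bool :=
  decide (p.1 < p.2 ∧ π p.1 < π p.2)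

theorem numInv_mul_inv (π τ : Equiv.Perm (Fin n)) : numInv (π * τ⁻¹) = dKT π τ := by
  have hrel : #{q : Fin n × Fin n | τ q.1 < τ q.2 ∧ π q.2 < π q.1} = numInv (π * τ⁻¹) := by
    refine card_equiv (τ.prodCongr τ) fun q => ?_
    simp only [mem_filter, mem_univ, true_and]
    simp
  rw [← hrel, dKT]
  -- a pair ordered one way by `τ` and the other way by `π` is matched with the same pair sorted
  refine card_nbij' (fun q => if q.1 < q.2 then q else q.swap)
    (fun q => if τ q.1 < τ q.2 then q else q.swap) ?_ ?_ ?_ ?_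
  all_goals
    intro q hq
    simp only [coe_filter, mem_univ, true_and, Set.mem_ofPred_eq] at hq ⊢
    have := π.injective.ne_iff (x := q.1) (y := q.2)
    have := τ.injective.ne_iff (x := q.1) (y := q.2)
    split_ifs <;> grind

theorem dKT_eq_hammingDist (π τ : Equiv.Perm (Fin n)) :
    dKT π τ = hammingDist (comparisonVector π) (comparisonVector τ) := by
  unfold dKT hammingDist comparisonVector
  congr 1
  ext p
  by_cases h : p.1 < p.2 <;> simp [h]

theorem eq_one_of_numInv_eq_zero {ρ : Equiv.Perm (Fin n)} (h : numInv ρ = 0) : ρ = 1 := by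
  rw [numInv, card_eq_zero, filter_eq_empty_iff] at h
  have hmono : StrictMono ρ := fun a b hab =>
    lt_of_le_of_ne (not_lt.1 fun hba => h (mem_univ (a, b)) ⟨hab, hba⟩) (ρ.injective.ne hab.ne)
  have := Subsingleton.elim (hmono.orderIsoOfSurjective ρ ρ.surjective) (OrderIso.refl _)
  ext a
  simpa using congrArg (fun e : Fin n ≃o Fin n => (e a : ℕ)) this

theorem comparisonVector_injective : Function.Injective (comparisonVector (n := n)) := by
  intro π τ h
  have h0 : numInv (π * τ⁻¹) = 0 := by
    rw [numInv_mul_inv, dKT_eq_hammingDist, h, hammingDist_self]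
  simpa [mul_inv_eq_one] using eq_one_of_numInv_eq_zero h0

theorem colA_apply (φ : ℝ) (τ π : Equiv.Perm (Fin n)) :
    colA φ τ π = φ ^ hammingDist (comparisonVector π) (comparisonVector τ) := by
  rw [← dKT_eq_hammingDist, ← numInv_mul_inv]
  rfl

end KendallTau

section Projection

variable {ρ κ : Type*} [Fintype ρ] [Fintype κ]

theorem norm_comp_le_of_injective (z : EuclideanSpace ℝ ρ) {r : κ → ρ}
    (hr : Function.Injective r) : ‖WithLp.toLp 2 (fun j => z (r j))‖ ≤ ‖z‖ := by
  refine (sq_le_sq₀ (norm_nonneg _) (norm_nonneg _)).1 ?_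
  rw [EuclideanSpace.real_norm_sq_eq, EuclideanSpace.real_norm_sq_eq]
  calc ∑ j, z (r j) ^ 2 = ∑ a ∈ univ.map ⟨r, hr⟩, z a ^ 2 :=
        (sum_map univ ⟨r, hr⟩ fun a => z a ^ 2).symm
    _ ≤ ∑ a, z a ^ 2 := sum_le_univ_sum_of_nonneg fun a => sq_nonneg _

theorem mul_norm_le_norm_sum_smul [DecidableEq κ] (c : κ → EuclideanSpace ℝ ρ) {r : κ → ρ}
    (hr : Function.Injective r) {μ : ℝ} (hK : (of (fun i j => c j (r i)) - μ • 1).PosSemidef)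
    (b : EuclideanSpace ℝ κ) : μ * ‖b‖ ≤ ‖∑ i, b i • c i‖ := by
  set z := ∑ i, b i • c i
  set zr : EuclideanSpace ℝ κ := WithLp.toLp 2 (fun j => z (r j))
  have hquad : μ * ‖b‖ ^ 2 ≤ inner ℝ b zr := by
    have h := hK.dotProduct_mulVec_nonneg b.ofLp
    rw [EuclideanSpace.real_norm_sq_eq, PiLp.inner_apply]
    simp only [dotProduct, Pi.star_apply, star_trivial, mulVec, Matrix.sub_apply, of_apply,
      Matrix.smul_apply, one_apply, smul_eq_mul, mul_ite, mul_one, mul_zero, sub_mul, ite_mul,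
      zero_mul, sum_sub_distrib, sum_ite_eq, mem_univ, ↓reduceIte, WithLp.ofLp_sum,
      WithLp.ofLp_smul, Finset.sum_apply, Pi.smul_apply, RCLike.inner_apply, Real.ringHom_apply,
      z, zr] at h ⊢
    refine sub_nonneg.1 (h.trans_eq ?_)
    rw [mul_sum, ← sum_sub_distrib]
    refine sum_congr rfl fun x _ => ?_
    rw [mul_sub, mul_sum, sum_mul]
    congr 1
    · exact sum_congr rfl fun y _ => by ring
    · ring
  have hcs : inner ℝ b zr ≤ ‖b‖ * ‖z‖ := (real_inner_le_norm b zr).trans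
    (mul_le_mul_of_nonneg_left (norm_comp_le_of_injective z hr) (norm_nonneg b))
  rcases (norm_nonneg b).eq_or_lt with hb | hb
  · rw [← hb, mul_zero]
    exact norm_nonneg _
  · refine le_of_mul_le_mul_left ?_ hb
    nlinarith

theorem le_norm_orthogonalProjectionOnto_of_posSemidef [DecidableEq κ]
    (c : κ → EuclideanSpace ℝ ρ) {r : κ → ρ} (hr : Function.Injective r) {μ : ℝ} (hμ : 0 ≤ μ)
    (hK : (of (fun i j => c j (r i)) - μ • 1).PosSemidef) (i₀ : κ) :
    μ ≤ ‖(Submodule.span ℝ (Set.range fun i : {i // i ≠ i₀} => c i))ᗮ.orthogonalProjectionOnto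
      (c i₀)‖ := by
  set W := Submodule.span ℝ (Set.range fun i : {i // i ≠ i₀} => c i)
  obtain ⟨a, ha⟩ :=
    (Submodule.mem_span_range_iff_exists_fun ℝ).1 (W.starProjection_apply_mem (c i₀))
  set b : EuclideanSpace ℝ κ := WithLp.toLp 2 fun i => if h : i = i₀ then 1 else -a ⟨i, h⟩
  have hb : c i₀ - W.starProjection (c i₀) = ∑ i, b i • c i := by
    rw [← ha, Fintype.sum_eq_add_sum_subtype_ne _ i₀]
    simp only [b, dite_smul, one_smul, neg_smul, dif_pos, sub_eq_add_neg, ← sum_neg_distrib]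
    exact congrArg _ (sum_congr rfl fun i _ => by rw [dif_neg i.2])
  have hb₀ : 1 ≤ ‖b‖ := by simpa [b] using PiLp.norm_apply_le b i₀
  rw [Submodule.orthogonalProjectionOnto_orthogonal]
  change μ ≤ ‖c i₀ - W.starProjection (c i₀)‖
  rw [hb]
  calc μ ≤ μ * ‖b‖ := le_mul_of_one_le_right hμ hb₀
    _ ≤ _ := mul_norm_le_norm_sum_smul c hr hK b

end Projection

theorem pow_div_sqrt_factorial_pow_le_pow {n k m : ℕ} {ε δ : ℝ} (hε0 : 0 < ε) (hε1 : ε ≤ 1)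
    (hεδ : ε ≤ δ) (hm : m ≤ n * k) : (ε ^ n / Real.sqrt n.factorial) ^ k ≤ δ ^ m := by
  have hsqrt : 1 ≤ Real.sqrt n.factorial :=
    Real.one_le_sqrt.2 (by exact_mod_cast n.factorial_pos)
  calc (ε ^ n / Real.sqrt n.factorial) ^ k ≤ (ε ^ n) ^ k :=
        pow_le_pow_left₀ (by positivity) (div_le_self (by positivity) hsqrt) k
    _ = ε ^ (n * k) := (pow_mul ε n k).symm
    _ ≤ ε ^ m := pow_le_pow_of_le_one hε0.le hε1 hm
    _ ≤ δ ^ m := pow_le_pow_left₀ hε0.le hεδ m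

/-- **Robust Kruskal rank of `A_n(φ)`.** Let `ε > 0` and `0 ≤ φ < 1 - ε`. For any `k`
distinct columns of `A_n(φ)`, the Euclidean norm of the orthogonal projection of one
column onto the orthogonal complement of the span of the other `k - 1` columns is at
least `(ε^n / √(n!))^k`. -/
theorem projection_lower_bound (n k : ℕ) (ε φ : ℝ) (hε : 0 < ε) (hφ0 : 0 ≤ φ)
    (hφ : φ < 1 - ε) (σ : Fin k → Equiv.Perm (Fin n)) (hσ : Function.Injective σ)
    (i₀ : Fin k) :
    (ε ^ n / Real.sqrt (n.factorial)) ^ k ≤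
      ‖(Submodule.orthogonalProjectionOnto
          ((Submodule.span ℝ
            (Set.range fun i : {i : Fin k // i ≠ i₀} => colA φ (σ i)))ᗮ))
        (colA φ (σ i₀))‖ := by
  set x := fun i => comparisonVector (σ i)
  obtain ⟨s, hs_card, hs_sep⟩ :=
    exists_separating_finset x univ (comparisonVector_injective.comp hσ).injOn
  have hK : (of (fun i j => colA φ (σ j) (σ i)) - (1 - φ) ^ #s • 1).PosSemidef := by
    have hcols : of (fun i j => colA φ (σ j) (σ i)) = agreementKernel φ x univ := by
      ext i j
      rw [agreementKernel_univ_apply, of_apply, colA_apply]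
    rw [hcols]
    exact posSemidef_agreementKernel_univ_sub_pow_smul_one x hφ0 (by linarith)
      fun i j => hs_sep i (mem_univ i) j (mem_univ j)
  have hs_nk : #s ≤ n * k := by
    rcases n.eq_zero_or_pos with rfl | hn
    · simp [eq_empty_of_isEmpty s]
    · rw [card_univ, Fintype.card_fin] at hs_card
      exact hs_card.trans ((k.sub_le 1).trans (Nat.le_mul_of_pos_left k hn))
  calc (ε ^ n / Real.sqrt n.factorial) ^ k ≤ (1 - φ) ^ #s :=
        pow_div_sqrt_factorial_pow_le_pow hε (by linarith) (by linarith) hs_nk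
    _ ≤ _ := le_norm_orthogonalProjectionOnto_of_posSemidef (fun i => colA φ (σ i)) hσ
        (pow_nonneg (by linarith) _) hK i₀
end

section
/- Let ε > 0 and consider two Mallows models M_1 = M(φ_1, π_1) and M_2 = M(φ_2, π_2) on permutations of [n] with π_1 ≠ π_2 and 0 ≤ φ_1, φ_2 ≤ 1 − ε. Then d_TV(M_1, M_2) ≥ ε/2. -/
open Finset

namespace LM

variable {n : ℕ}

def swapIf (c : Equiv.Perm (Fin n)) (a b w z : Fin n) : Fin n :=
  if z = a then (if (c a < c w ↔ c b < c w) then b else a)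
  else if z = b then (if (c a < c w ↔ c b < c w) then a else b) else z

def pairMap (c : Equiv.Perm (Fin n)) (a b : Fin n) (p : Fin n × Fin n) : Fin n × Fin n :=
  (swapIf c a b p.2 p.1, swapIf c a b p.1 p.2)

def Tset (c σ : Equiv.Perm (Fin n)) : Finset (Fin n × Fin n) :=
  Finset.univ.filter fun p : Fin n × Fin n =>
    p.1 ≠ p.2 ∧ ¬((c p.1 < c p.2) ↔ (σ p.1 < σ p.2))

lemma flip_lt {u v : Fin n} (h : u ≠ v) : (v < u) ↔ ¬(u < v) := by
  have h' : u.val ≠ v.val := fun hh => h (Fin.ext hh)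
  rw [Fin.lt_def, Fin.lt_def]; omega

lemma dis_symm (c σ : Equiv.Perm (Fin n)) {x y : Fin n} (hxy : x ≠ y)
    (h : ¬((c x < c y) ↔ (σ x < σ y))) : ¬((c y < c x) ↔ (σ y < σ x)) := by
  rw [flip_lt (fun hh => hxy (c.injective hh)), flip_lt (fun hh => hxy (σ.injective hh))]
  tauto

lemma cne (c : Equiv.Perm (Fin n)) (x y : Fin n) (h : x ≠ y) : (c x).val ≠ (c y).val :=
  fun hh => h (c.injective (Fin.ext hh))

lemma Tcard (c σ : Equiv.Perm (Fin n)) : (Tset c σ).card = 2 * dKT c σ := by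
  classical
  have hsplit : Tset c σ =
      (Finset.univ.filter fun p : Fin n × Fin n =>
        (p.1 < p.2 ∧ ¬((c p.1 < c p.2) ↔ (σ p.1 < σ p.2))) ∨
        (p.2 < p.1 ∧ ¬((c p.1 < c p.2) ↔ (σ p.1 < σ p.2)))) := by
    apply Finset.filter_congr
    intro p _
    constructor
    · rintro ⟨h1, h2⟩
      rcases h1.lt_or_gt with h | h
      · exact Or.inl ⟨h, h2⟩
      · exact Or.inr ⟨h, h2⟩
    · rintro (⟨h1, h2⟩ | ⟨h1, h2⟩)
      · exact ⟨ne_of_lt h1, h2⟩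
      · exact ⟨(ne_of_lt h1).symm, h2⟩
  rw [hsplit, Finset.filter_or, Finset.card_union_of_disjoint]
  · have hswap : (Finset.univ.filter fun p : Fin n × Fin n =>
        p.2 < p.1 ∧ ¬((c p.1 < c p.2) ↔ (σ p.1 < σ p.2))).card
        = (Finset.univ.filter fun p : Fin n × Fin n =>
        p.1 < p.2 ∧ ¬((c p.1 < c p.2) ↔ (σ p.1 < σ p.2))).card := by
      apply Finset.card_bij (fun p _ => Prod.swap p)
      · intro p hp
        simp only [Finset.mem_filter, Finset.mem_univ, true_and] at hp ⊢
        exact ⟨hp.1, dis_symm c σ (ne_of_lt hp.1).symm hp.2⟩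
      · intro p hp q hq h
        exact Prod.swap_injective h
      · intro p hp
        simp only [Finset.mem_filter, Finset.mem_univ, true_and] at hp
        exact ⟨Prod.swap p, by
          simp only [Finset.mem_filter, Finset.mem_univ, true_and, Prod.fst_swap, Prod.snd_swap]
          exact ⟨hp.1, dis_symm c σ (ne_of_lt hp.1) hp.2⟩, by simp⟩
    rw [hswap, dKT]; ring
  · rw [Finset.disjoint_left]
    rintro p hp hq
    simp only [Finset.mem_filter] at hp hq
    exact absurd (hp.2.1.trans hq.2.1) (lt_irrefl _)

section
variable (c σ : Equiv.Perm (Fin n)) (a b : Fin n)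

lemma mem_step (hab : a < b) (E : (c a < c b) ↔ (σ a < σ b))
    (y : Fin n) (hya : y ≠ a) (hyb : y ≠ b) :
    (((c a < c y ↔ c b < c y)) → ¬((c a < c y) ↔ (σ a < σ y)) →
        ¬((c b < c y) ↔ ((σ * Equiv.swap a b) b < (σ * Equiv.swap a b) y)))
  ∧ ((¬(c a < c y ↔ c b < c y)) → ¬((c a < c y) ↔ (σ a < σ y)) →
        ¬((c a < c y) ↔ ((σ * Equiv.swap a b) a < (σ * Equiv.swap a b) y)))
  ∧ (((c a < c y ↔ c b < c y)) → ¬((c b < c y) ↔ (σ b < σ y)) →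
        ¬((c a < c y) ↔ ((σ * Equiv.swap a b) a < (σ * Equiv.swap a b) y)))
  ∧ ((¬(c a < c y ↔ c b < c y)) → ¬((c b < c y) ↔ (σ b < σ y)) →
        ¬((c b < c y) ↔ ((σ * Equiv.swap a b) b < (σ * Equiv.swap a b) y))) := by
  have hab' : a ≠ b := ne_of_lt hab
  have h1 : (σ * Equiv.swap a b) a = σ b := by
    simp [Equiv.Perm.mul_apply, Equiv.swap_apply_left]
  have h2 : (σ * Equiv.swap a b) b = σ a := by
    simp [Equiv.Perm.mul_apply, Equiv.swap_apply_right]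
  have h3 : (σ * Equiv.swap a b) y = σ y := by
    simp [Equiv.Perm.mul_apply, Equiv.swap_apply_of_ne_of_ne hya hyb]
  rw [h1, h2, h3]
  have c1 := cne c a b hab'
  have c2 := cne c a y (Ne.symm hya)
  have c3 := cne c b y (Ne.symm hyb)
  have s1 := cne σ a b hab'
  have s2 := cne σ a y (Ne.symm hya)
  have s3 := cne σ b y (Ne.symm hyb)
  simp only [Fin.lt_def] at *
  omega

lemma tset_step (hab : a < b) (E : (c a < c b) ↔ (σ a < σ b)) :
    (Tset c σ).card + 2 ≤ (Tset c (σ * Equiv.swap a b)).card := by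
  classical
  have hab' : a ≠ b := ne_of_lt hab
  have hba : b ≠ a := Ne.symm hab'
  set σ' := σ * Equiv.swap a b with hσ'
  have h1 : σ' a = σ b := by simp [hσ', Equiv.Perm.mul_apply, Equiv.swap_apply_left]
  have h2 : σ' b = σ a := by simp [hσ', Equiv.Perm.mul_apply, Equiv.swap_apply_right]
  have hfix : ∀ z : Fin n, z ≠ a → z ≠ b → σ' z = σ z := fun z hza hzb => by
    simp [hσ', Equiv.Perm.mul_apply, Equiv.swap_apply_of_ne_of_ne hza hzb]
  have Dab : ¬((c a < c b) ↔ (σ' a < σ' b)) := by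
    rw [h1, h2]
    have s1 := cne σ a b hab'
    simp only [Fin.lt_def] at *
    omega
  have memab : (a, b) ∈ Tset c σ' := by
    simp only [Tset, Finset.mem_filter, Finset.mem_univ, true_and]
    exact ⟨hab', Dab⟩
  have memba : (b, a) ∈ Tset c σ' := by
    simp only [Tset, Finset.mem_filter, Finset.mem_univ, true_and]
    exact ⟨hba, dis_symm c σ' hab' Dab⟩
  have hmaps : ∀ p ∈ Tset c σ,
      pairMap c a b p ∈ ((Tset c σ').erase (a, b)).erase (b, a) := by
    rintro ⟨x, y⟩ hp
    simp only [Tset, Finset.mem_filter, Finset.mem_univ, true_and] at hp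
    obtain ⟨hxy, hD⟩ := hp
    simp only [Finset.mem_erase, Tset, Finset.mem_filter, Finset.mem_univ, true_and]
    by_cases hxa : x = a
    · rw [hxa] at hD hxy ⊢
      by_cases hyb : y = b
      · rw [hyb] at hD; exact (hD E).elim
      · have hya : y ≠ a := Ne.symm hxy
        by_cases hout : (c a < c y ↔ c b < c y)
        · have himg : pairMap c a b (a, y) = (b, y) := by
            simp [pairMap, swapIf, hya, hyb, hout]
          rw [himg]
          exact ⟨fun h => hya (congrArg Prod.snd h), fun h => hba (congrArg Prod.fst h),
            Ne.symm hyb, (mem_step c σ a b hab E y hya hyb).1 hout hD⟩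
        · have himg : pairMap c a b (a, y) = (a, y) := by
            simp [pairMap, swapIf, hya, hyb, hout]
          rw [himg]
          exact ⟨fun h => hab' (congrArg Prod.fst h), fun h => hyb (congrArg Prod.snd h),
            Ne.symm hya, (mem_step c σ a b hab E y hya hyb).2.1 hout hD⟩
    · by_cases hxb : x = b
      · rw [hxb] at hD hxy ⊢
        by_cases hya : y = a
        · rw [hya] at hD; exact ((dis_symm c σ hba hD) E).elim
        · have hyb : y ≠ b := Ne.symm hxy
          by_cases hout : (c a < c y ↔ c b < c y)
          · have himg : pairMap c a b (b, y) = (a, y) := by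
              simp [pairMap, swapIf, hya, hyb, hout, hba]
            rw [himg]
            exact ⟨fun h => hab' (congrArg Prod.fst h), fun h => hyb (congrArg Prod.snd h),
              Ne.symm hya, (mem_step c σ a b hab E y hya hyb).2.2.1 hout hD⟩
          · have himg : pairMap c a b (b, y) = (b, y) := by
              simp [pairMap, swapIf, hya, hyb, hout, hba]
            rw [himg]
            exact ⟨fun h => hya (congrArg Prod.snd h), fun h => hba (congrArg Prod.fst h),
              Ne.symm hyb, (mem_step c σ a b hab E y hya hyb).2.2.2 hout hD⟩
      · by_cases hya : y = a
        · rw [hya] at hD hxy ⊢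
          have hDs : ¬((c a < c x) ↔ (σ a < σ x)) := dis_symm c σ hxy hD
          by_cases hout : (c a < c x ↔ c b < c x)
          · have himg : pairMap c a b (x, a) = (x, b) := by
              simp [pairMap, swapIf, hxa, hxb, hout]
            rw [himg]
            exact ⟨fun h => hxb (congrArg Prod.fst h), fun h => hxa (congrArg Prod.fst h),
              hxb, dis_symm c σ' (Ne.symm hxb) ((mem_step c σ a b hab E x hxa hxb).1 hout hDs)⟩
          · have himg : pairMap c a b (x, a) = (x, a) := by
              simp [pairMap, swapIf, hxa, hxb, hout]
            rw [himg]
            exact ⟨fun h => hxb (congrArg Prod.fst h), fun h => hxa (congrArg Prod.fst h),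
              hxa, dis_symm c σ' (Ne.symm hxa) ((mem_step c σ a b hab E x hxa hxb).2.1 hout hDs)⟩
        · by_cases hyb : y = b
          · rw [hyb] at hD hxy ⊢
            have hDs : ¬((c b < c x) ↔ (σ b < σ x)) := dis_symm c σ hxy hD
            by_cases hout : (c a < c x ↔ c b < c x)
            · have himg : pairMap c a b (x, b) = (x, a) := by
                simp [pairMap, swapIf, hxa, hxb, hout, hba]
              rw [himg]
              exact ⟨fun h => hxb (congrArg Prod.fst h), fun h => hxa (congrArg Prod.fst h),
                hxa, dis_symm c σ' (Ne.symm hxa)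
                  ((mem_step c σ a b hab E x hxa hxb).2.2.1 hout hDs)⟩
            · have himg : pairMap c a b (x, b) = (x, b) := by
                simp [pairMap, swapIf, hxa, hxb, hout, hba]
              rw [himg]
              exact ⟨fun h => hxb (congrArg Prod.fst h), fun h => hxa (congrArg Prod.fst h),
                hxb, dis_symm c σ' (Ne.symm hxb)
                  ((mem_step c σ a b hab E x hxa hxb).2.2.2 hout hDs)⟩
          · have himg : pairMap c a b (x, y) = (x, y) := by
              simp [pairMap, swapIf, hxa, hxb, hya, hyb]
            rw [himg]
            refine ⟨fun h => hxb (congrArg Prod.fst h), fun h => hxa (congrArg Prod.fst h),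
              hxy, ?_⟩
            rw [hfix x hxa hxb, hfix y hya hyb]
            exact hD
  have invol : ∀ p ∈ Tset c σ, pairMap c a b (pairMap c a b p) = p := by
    rintro ⟨x, y⟩ hp
    simp only [Tset, Finset.mem_filter, Finset.mem_univ, true_and] at hp
    obtain ⟨hxy, hD⟩ := hp
    by_cases hxa : x = a
    · rw [hxa] at hD hxy ⊢
      by_cases hyb : y = b
      · rw [hyb] at hD; exact (hD E).elim
      · have hya : y ≠ a := Ne.symm hxy
        by_cases hout : (c a < c y ↔ c b < c y) <;>
          simp [pairMap, swapIf, hya, hyb, hout, hba]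
    · by_cases hxb : x = b
      · rw [hxb] at hD hxy ⊢
        by_cases hya : y = a
        · rw [hya] at hD; exact ((dis_symm c σ hba hD) E).elim
        · have hyb : y ≠ b := Ne.symm hxy
          by_cases hout : (c a < c y ↔ c b < c y) <;>
            simp [pairMap, swapIf, hya, hyb, hout, hba]
      · by_cases hya : y = a
        · rw [hya] at hD hxy ⊢
          by_cases hout : (c a < c x ↔ c b < c x) <;>
            simp [pairMap, swapIf, hxa, hxb, hout, hba]
        · by_cases hyb : y = b
          · rw [hyb] at hD hxy ⊢
            by_cases hout : (c a < c x ↔ c b < c x) <;>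
              simp [pairMap, swapIf, hxa, hxb, hout, hba]
          · simp [pairMap, swapIf, hxa, hxb, hya, hyb]
  have hinj : Set.InjOn (pairMap c a b) (Tset c σ) := by
    intro p hp q hq h
    rw [← invol p (Finset.mem_coe.mp hp), h, invol q (Finset.mem_coe.mp hq)]
  have h2 : (Tset c σ).card ≤ (((Tset c σ').erase (a, b)).erase (b, a)).card :=
    Finset.card_le_card_of_injOn _ hmaps hinj
  have h3 : (b, a) ∈ (Tset c σ').erase (a, b) :=
    Finset.mem_erase.mpr ⟨fun h => hba (congrArg Prod.fst h), memba⟩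
  have h4 : (((Tset c σ').erase (a, b)).erase (b, a)).card = (Tset c σ').card - 1 - 1 := by
    rw [Finset.card_erase_of_mem h3, Finset.card_erase_of_mem memab]
  have h5 : 2 ≤ (Tset c σ').card := by
    have := Finset.one_lt_card.mpr ⟨(a, b), memab, (b, a), memba,
      fun h => hab' (congrArg Prod.fst h)⟩
    omega
  omega

lemma dKT_swap (hab : a < b) (E : (c a < c b) ↔ (σ a < σ b)) :
    dKT c σ + 1 ≤ dKT c (σ * Equiv.swap a b) := by
  have h := tset_step c σ a b hab E
  rw [Tcard, Tcard] at h
  omega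

end

lemma dKT_self (c : Equiv.Perm (Fin n)) : dKT c c = 0 := by
  rw [dKT, Finset.card_eq_zero, Finset.filter_eq_empty_iff]
  intro p _ h
  exact h.2 Iff.rfl

lemma exists_pair (π₁ π₂ : Equiv.Perm (Fin n)) (hne : π₁ ≠ π₂) :
    ∃ a b : Fin n, a < b ∧ ¬((π₁ a < π₁ b) ↔ (π₂ a < π₂ b)) := by
  by_contra hcon
  push_neg at hcon
  apply hne
  have hsm : StrictMono (fun u : Fin n => π₂ (π₁.symm u)) := by
    intro u v huv
    have huv' : π₁ (π₁.symm u) < π₁ (π₁.symm v) := by simpa using huv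
    rcases lt_trichotomy (π₁.symm u) (π₁.symm v) with h | h | h
    · exact (hcon _ _ h).mp huv'
    · rw [h] at huv'; exact absurd huv' (lt_irrefl _)
    · have := (hcon _ _ h)
      have hnot : ¬(π₁ (π₁.symm v) < π₁ (π₁.symm u)) := not_lt_of_gt huv'
      have h2 : ¬(π₂ (π₁.symm v) < π₂ (π₁.symm u)) := fun hh => hnot (this.mpr hh)
      have hne2 : π₂ (π₁.symm u) ≠ π₂ (π₁.symm v) :=
        fun hh => (ne_of_lt h).symm (π₂.injective hh)
      rcases hne2.lt_or_gt with h' | h'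
      · exact h'
      · exact absurd h' h2
  have hrange : Set.range (fun u : Fin n => π₂ (π₁.symm u)) = Set.range (id : Fin n → Fin n) := by
    rw [Set.range_id]
    exact ((π₁.symm.trans π₂).surjective).range_eq
  have hid : (fun u : Fin n => π₂ (π₁.symm u)) = id := by
    haveI : WellFoundedLT (Fin n) := inferInstance
    exact (StrictMono.range_inj hsm strictMono_id).mp hrange
  ext x
  have h2 : π₂ x = π₁ x := by simpa using congrFun hid (π₁ x)
  exact congrArg Fin.val h2.symm

lemma sum_ineq (c : Equiv.Perm (Fin n)) (a b : Fin n) (hab : a < b)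
    (φ : ℝ) (h0 : 0 ≤ φ) (h1 : φ ≤ 1) :
    ∑ τ ∈ Finset.univ.filter (fun σ : Equiv.Perm (Fin n) => ¬((c a < c b) ↔ (σ a < σ b))),
        φ ^ dKT c τ
    ≤ φ * ∑ τ ∈ Finset.univ.filter (fun σ : Equiv.Perm (Fin n) => ((c a < c b) ↔ (σ a < σ b))),
        φ ^ dKT c τ := by
  classical
  have hab' : a ≠ b := ne_of_lt hab
  have hswap : ∀ τ : Equiv.Perm (Fin n),
      ((τ * Equiv.swap a b) a = τ b) ∧ ((τ * Equiv.swap a b) b = τ a) := fun τ =>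
    ⟨by simp [Equiv.Perm.mul_apply], by simp [Equiv.Perm.mul_apply]⟩
  have hmemiff : ∀ τ : Equiv.Perm (Fin n),
      ((c a < c b) ↔ (τ a < τ b)) ↔
        ¬((c a < c b) ↔ ((τ * Equiv.swap a b) a < (τ * Equiv.swap a b) b)) := by
    intro τ
    rw [(hswap τ).1, (hswap τ).2]
    have s1 := cne τ a b hab'
    simp only [Fin.lt_def] at *
    omega
  have hinv : ∀ τ : Equiv.Perm (Fin n), (τ * Equiv.swap a b) * Equiv.swap a b = τ := by
    intro τ
    rw [mul_assoc, Equiv.swap_mul_self, mul_one]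
  have key : ∑ τ ∈ Finset.univ.filter
        (fun σ : Equiv.Perm (Fin n) => ¬((c a < c b) ↔ (σ a < σ b))), φ ^ dKT c τ
      = ∑ τ ∈ Finset.univ.filter
        (fun σ : Equiv.Perm (Fin n) => ((c a < c b) ↔ (σ a < σ b))),
          φ ^ dKT c (τ * Equiv.swap a b) := by
    apply Finset.sum_nbij' (fun τ => τ * Equiv.swap a b) (fun τ => τ * Equiv.swap a b)
    · intro τ hτ
      simp only [Finset.mem_filter, Finset.mem_univ, true_and] at hτ ⊢
      have h1 := hmemiff τ
      have h2 := hmemiff (τ * Equiv.swap a b)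
      rw [hinv τ] at h2
      tauto
    · intro τ hτ
      simp only [Finset.mem_filter, Finset.mem_univ, true_and] at hτ ⊢
      exact (hmemiff τ).mp hτ
    · intro τ _; exact hinv τ
    · intro τ _; exact hinv τ
    · intro τ _
      rw [hinv τ]
  rw [key, Finset.mul_sum]
  apply Finset.sum_le_sum
  intro τ hτ
  simp only [Finset.mem_filter, Finset.mem_univ, true_and] at hτ
  have hd : dKT c τ + 1 ≤ dKT c (τ * Equiv.swap a b) := dKT_swap c τ a b hab hτ
  calc φ ^ dKT c (τ * Equiv.swap a b) ≤ φ ^ (dKT c τ + 1) :=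
        pow_le_pow_of_le_one h0 h1 hd
    _ = φ * φ ^ dKT c τ := by ring
  
lemma frac_bound (ε φ s t : ℝ) (hε : 0 < ε) (hφ0 : 0 ≤ φ) (hφ : φ ≤ 1 - ε)
    (hs : 1 ≤ s) (ht0 : 0 ≤ t) (ht : t ≤ φ * s) : ε / 2 ≤ (s - t) / (s + t) := by
  have hst : 0 < s + t := by linarith
  rw [div_le_div_iff₀ (by norm_num) hst]
  have h2 : t ≤ (1 - ε) * s :=
    le_trans ht (mul_le_mul_of_nonneg_right hφ (by linarith))
  nlinarith [mul_le_mul_of_nonneg_left h2 hε.le,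
    mul_nonneg (mul_nonneg hε.le hε.le) (by linarith : (0:ℝ) ≤ s)]

end LM

set_option maxHeartbeats 1000000 in
/-- **Claim 3.5 of Liu–Moitra.** Two Mallows models with different base permutations and
scaling parameters at most `1 - ε` are at total variation distance at least `ε/2`. -/
theorem tv_lower_bound_distinct_centers (n : ℕ) (ε φ₁ φ₂ : ℝ) (hε : 0 < ε)
    (π₁ π₂ : Equiv.Perm (Fin n)) (hne : π₁ ≠ π₂)
    (hφ₁0 : 0 ≤ φ₁) (hφ₁ : φ₁ ≤ 1 - ε) (hφ₂0 : 0 ≤ φ₂) (hφ₂ : φ₂ ≤ 1 - ε) :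
    ε / 2 ≤ dTV (mallows φ₁ π₁) (mallows φ₂ π₂) := by
  classical
  obtain ⟨a, b, hab, hdis⟩ := LM.exists_pair π₁ π₂ hne
  have hε1 : ε ≤ 1 := by linarith
  have hφ₁1 : φ₁ ≤ 1 := by linarith
  have hφ₂1 : φ₂ ≤ 1 := by linarith
  set F₁ := Finset.univ.filter
    (fun σ : Equiv.Perm (Fin n) => ((π₁ a < π₁ b) ↔ (σ a < σ b))) with hF₁def
  set F₂ := Finset.univ.filter
    (fun σ : Equiv.Perm (Fin n) => ¬((π₁ a < π₁ b) ↔ (σ a < σ b))) with hF₂def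
  set s₁ := ∑ τ ∈ F₁, φ₁ ^ dKT π₁ τ with hs₁def
  set t₁ := ∑ τ ∈ F₂, φ₁ ^ dKT π₁ τ with ht₁def
  set s₂ := ∑ τ ∈ F₂, φ₂ ^ dKT π₂ τ with hs₂def
  set t₂ := ∑ τ ∈ F₁, φ₂ ^ dKT π₂ τ with ht₂def
  -- identify the filters w.r.t. π₂
  have hflip : ∀ σ : Equiv.Perm (Fin n),
      (¬((π₂ a < π₂ b) ↔ (σ a < σ b))) ↔ ((π₁ a < π₁ b) ↔ (σ a < σ b)) := by
    intro σ; tauto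
  have hG1 : Finset.univ.filter
      (fun σ : Equiv.Perm (Fin n) => ¬((π₂ a < π₂ b) ↔ (σ a < σ b))) = F₁ := by
    rw [hF₁def]
    exact Finset.filter_congr (fun σ _ => hflip σ)
  have hG2 : Finset.univ.filter
      (fun σ : Equiv.Perm (Fin n) => ((π₂ a < π₂ b) ↔ (σ a < σ b))) = F₂ := by
    rw [hF₂def]
    refine Finset.filter_congr (fun σ _ => ?_)
    have := hflip σ; tauto
  have ht₁le : t₁ ≤ φ₁ * s₁ := LM.sum_ineq π₁ a b hab φ₁ hφ₁0 hφ₁1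
  have ht₂le : t₂ ≤ φ₂ * s₂ := by
    have h := LM.sum_ineq π₂ a b hab φ₂ hφ₂0 hφ₂1
    rw [hG1, hG2] at h
    exact h
  have hmem₁ : π₁ ∈ F₁ := by simp [hF₁def]
  have hmem₂ : π₂ ∈ F₂ := by simp [hF₂def, hdis]
  have hs₁1 : (1 : ℝ) ≤ s₁ := by
    have := Finset.single_le_sum (f := fun τ => φ₁ ^ dKT π₁ τ)
      (fun τ _ => pow_nonneg hφ₁0 _) hmem₁
    simpa [LM.dKT_self] using this
  have hs₂1 : (1 : ℝ) ≤ s₂ := by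
    have := Finset.single_le_sum (f := fun τ => φ₂ ^ dKT π₂ τ)
      (fun τ _ => pow_nonneg hφ₂0 _) hmem₂
    simpa [LM.dKT_self] using this
  have ht₁0 : 0 ≤ t₁ := Finset.sum_nonneg fun τ _ => pow_nonneg hφ₁0 _
  have ht₂0 : 0 ≤ t₂ := Finset.sum_nonneg fun τ _ => pow_nonneg hφ₂0 _
  have hZ₁ : (∑ τ : Equiv.Perm (Fin n), φ₁ ^ dKT π₁ τ) = s₁ + t₁ := by
    rw [hs₁def, ht₁def, hF₁def, hF₂def]
    exact (Finset.sum_filter_add_sum_filter_not _ _ _).symm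
  have hZ₂ : (∑ τ : Equiv.Perm (Fin n), φ₂ ^ dKT π₂ τ) = s₂ + t₂ := by
    rw [hs₂def, ht₂def, hF₁def, hF₂def]
    have := Finset.sum_filter_add_sum_filter_not Finset.univ
      (fun σ : Equiv.Perm (Fin n) => ((π₁ a < π₁ b) ↔ (σ a < σ b)))
      (fun τ => φ₂ ^ dKT π₂ τ)
    linarith [this]
  have hZ₁pos : (0:ℝ) < s₁ + t₁ := by linarith
  have hZ₂pos : (0:ℝ) < s₂ + t₂ := by linarith
  -- the mallows sums over F₁ and F₂
  have hPQ₁ : ∑ σ ∈ F₁, (mallows φ₁ π₁ σ - mallows φ₂ π₂ σ)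
      = s₁ / (s₁ + t₁) - t₂ / (s₂ + t₂) := by
    rw [Finset.sum_sub_distrib]
    simp only [mallows, hZ₁, hZ₂]
    rw [← Finset.sum_div, ← Finset.sum_div]
  have hPQ₂ : ∑ σ ∈ F₂, (mallows φ₂ π₂ σ - mallows φ₁ π₁ σ)
      = s₂ / (s₂ + t₂) - t₁ / (s₁ + t₁) := by
    rw [Finset.sum_sub_distrib]
    simp only [mallows, hZ₁, hZ₂]
    rw [← Finset.sum_div, ← Finset.sum_div]
  have habs : ∑ σ : Equiv.Perm (Fin n), |mallows φ₁ π₁ σ - mallows φ₂ π₂ σ|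
      = ∑ σ ∈ F₁, |mallows φ₁ π₁ σ - mallows φ₂ π₂ σ|
      + ∑ σ ∈ F₂, |mallows φ₁ π₁ σ - mallows φ₂ π₂ σ| := by
    rw [hF₁def, hF₂def]
    exact (Finset.sum_filter_add_sum_filter_not _ _ _).symm
  have hb₁ : ∑ σ ∈ F₁, (mallows φ₁ π₁ σ - mallows φ₂ π₂ σ)
      ≤ ∑ σ ∈ F₁, |mallows φ₁ π₁ σ - mallows φ₂ π₂ σ| :=
    Finset.sum_le_sum fun σ _ => le_abs_self _
  have hb₂ : ∑ σ ∈ F₂, (mallows φ₂ π₂ σ - mallows φ₁ π₁ σ)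
      ≤ ∑ σ ∈ F₂, |mallows φ₁ π₁ σ - mallows φ₂ π₂ σ| :=
    Finset.sum_le_sum fun σ _ => by rw [abs_sub_comm]; exact le_abs_self _
  have hfrac₁ : ε / 2 ≤ (s₁ - t₁) / (s₁ + t₁) :=
    LM.frac_bound ε φ₁ s₁ t₁ hε hφ₁0 hφ₁ hs₁1 ht₁0 ht₁le
  have hfrac₂ : ε / 2 ≤ (s₂ - t₂) / (s₂ + t₂) :=
    LM.frac_bound ε φ₂ s₂ t₂ hε hφ₂0 hφ₂ hs₂1 ht₂0 ht₂le
  have hsub₁ : (s₁ - t₁) / (s₁ + t₁) = s₁ / (s₁ + t₁) - t₁ / (s₁ + t₁) := sub_div _ _ _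
  have hsub₂ : (s₂ - t₂) / (s₂ + t₂) = s₂ / (s₂ + t₂) - t₂ / (s₂ + t₂) := sub_div _ _ _
  have hA : ε ≤ ∑ σ : Equiv.Perm (Fin n), |mallows φ₁ π₁ σ - mallows φ₂ π₂ σ| := by
    rw [habs]
    have := hPQ₁; have := hPQ₂
    linarith [hb₁, hb₂, hPQ₁, hPQ₂, hfrac₁, hfrac₂, hsub₁.symm.le, hsub₂.symm.le]
  rw [dTV]
  linarith
end

section
/- Let n ≥ 2, let π be a permutation of [n], let 0 < μ ≤ 1, and let φ_1, φ_2 ∈ [0,1) be scaling parameters with |φ_1 − φ_2| ≤ μ²/(10n³). Then d_TV(M(φ_1, π), M(φ_2, π)) ≤ μ. -/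
/-!
With `Z(φ) = ∑_τ φ ^ inv(τ)` (the normaliser of `M(φ, π)` after relabelling positions by `π`)
and `φ₂ ≤ φ₁`, the weights `φ₂ ^ d ≤ φ₁ ^ d` are pointwise ordered, so `d_TV ≤ 1 - Z(φ₂)/Z(φ₁)`.
Since `φ₁ ^ k - φ₂ ^ k ≤ (φ₁ - φ₂) k φ₁ ^ (k - 1)`, it suffices that
`∑_τ inv(τ) φ ^ (inv(τ) - 1) ≤ n² Z(φ)` for `φ ≤ 1`: charge each inversion `(a, b)` of `τ` to
`τ ∘ (a b)`, which has fewer inversions, and `τ ↦ τ ∘ (a b)` is injective for each of the `n²`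
pairs `(a, b)`. Hence `d_TV ≤ n² |φ₁ - φ₂| ≤ μ² / (10 n) ≤ μ`.
-/

open Finset

open Equiv

section Inversions

variable {α β : Type*} [LinearOrder α] [LinearOrder β] [Fintype α]

def inversions (f : α → β) : Finset (α × α) :=
  {p | p.1 < p.2 ∧ f p.2 < f p.1}

theorem card_inversions_comp_swap_lt {f : α → β} {a b : α} (hab : a < b) (hba : f b < f a) :
    #(inversions (f ∘ swap a b)) < #(inversions f) := by
  set s := swap a b
  have hmem : (a, b) ∈ inversions f := by simp [inversions, hab, hba]
  -- An inversion `(i, j)` of `f ∘ s` goes to `(s i, s j)` when `s` keeps it ordered; the pairs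
  -- whose order `s` reverses are `(a, c)` and `(c, b)` with `a < c < b`, already inversions of `f`.
  calc #(inversions (f ∘ s)) ≤ #((inversions f).erase (a, b)) := by
        refine card_le_card_of_injOn (fun p => if s p.1 < s p.2 then (s p.1, s p.2) else p) ?_ ?_
        · rintro ⟨i, j⟩ hij
          simp only [inversions, coe_filter, mem_univ, true_and, Set.mem_ofPred_eq,
            Function.comp_apply, coe_erase, Set.mem_sdiff, Set.mem_singleton_iff] at hij ⊢
          simp only [s, swap_apply_def] at hij ⊢
          split_ifs at hij ⊢ <;> grind
        · rintro ⟨i, j⟩ hij ⟨k, l⟩ hkl h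
          simp only [inversions, coe_filter, mem_univ, true_and, Set.mem_ofPred_eq] at hij hkl
          have hs : ∀ x, s (s x) = x := swap_apply_self a b
          simp only at h
          split_ifs at h <;> grind
    _ < #(inversions f) := card_erase_lt_of_mem hmem

theorem sum_card_inversions_mul_pow_le {φ : ℝ} (h0 : 0 ≤ φ) (h1 : φ ≤ 1) :
    ∑ τ : Perm α, (#(inversions ⇑τ) : ℝ) * φ ^ (#(inversions ⇑τ) - 1) ≤
      (Fintype.card α : ℝ) ^ 2 * ∑ τ : Perm α, φ ^ #(inversions ⇑τ) := by
  calc ∑ τ : Perm α, (#(inversions ⇑τ) : ℝ) * φ ^ (#(inversions ⇑τ) - 1)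
      = ∑ τ : Perm α, ∑ _p ∈ inversions ⇑τ, φ ^ (#(inversions ⇑τ) - 1) := by
        simp only [sum_const, nsmul_eq_mul]
    _ ≤ ∑ τ : Perm α, ∑ p ∈ inversions ⇑τ, φ ^ #(inversions ⇑(τ * swap p.1 p.2)) := by
        refine sum_le_sum fun τ _ => sum_le_sum fun p hp => pow_le_pow_of_le_one h0 h1 ?_
        simp only [inversions, mem_filter, mem_univ, true_and] at hp
        have := card_inversions_comp_swap_lt hp.1 hp.2
        rw [Perm.coe_mul]
        omega
    _ ≤ ∑ τ : Perm α, ∑ p : α × α, φ ^ #(inversions ⇑(τ * swap p.1 p.2)) :=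
        sum_le_sum fun τ _ => sum_le_univ_sum_of_nonneg fun _ => by positivity
    _ = ∑ _p : α × α, ∑ τ : Perm α, φ ^ #(inversions ⇑τ) := by
        rw [sum_comm]
        exact sum_congr rfl fun p _ =>
          Fintype.sum_equiv (Equiv.mulRight (swap p.1 p.2)) _ _ fun _ => rfl
    _ = (Fintype.card α : ℝ) ^ 2 * ∑ τ : Perm α, φ ^ #(inversions ⇑τ) := by
        simp only [sum_const, card_univ, Fintype.card_prod, nsmul_eq_mul]
        push_cast
        ring

theorem card_filter_lt_comp_perm (e : Perm α) (R : α → α → Prop) [DecidableRel R]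
    (hR : ∀ i j, R i j → R j i) :
    #{p : α × α | p.1 < p.2 ∧ R (e p.1) (e p.2)} = #{p : α × α | p.1 < p.2 ∧ R p.1 p.2} := by
  -- Both sides count unordered pairs, as `R` is symmetric; `e` permutes unordered pairs.
  let sort (p : α × α) : α × α := if p.1 < p.2 then p else p.swap
  refine card_nbij' (fun p => sort (e p.1, e p.2)) (fun q => sort (e.symm q.1, e.symm q.2))
    ?_ ?_ ?_ ?_
  all_goals
    rintro ⟨i, j⟩ h
    simp only [sort, coe_filter, Set.mem_ofPred_eq] at h ⊢
    have := e.injective.eq_iff (a := i) (b := j)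
    have := e.symm.injective.eq_iff (a := i) (b := j)
    split_ifs <;> grind [apply_symm_apply, symm_apply_apply]

end Inversions

section Mallows

variable {n : ℕ}

theorem dKT_eq_numInv (π σ : Perm (Fin n)) : dKT π σ = numInv (σ * π⁻¹) := by
  have key := card_filter_lt_comp_perm π (fun x y => ¬(x < y ↔ σ (π⁻¹ x) < σ (π⁻¹ y)))
    fun x y h => by
      have := (σ * π⁻¹).injective.eq_iff (a := x) (b := y)
      simp only [Perm.mul_apply] at this
      grind
  simp only [Perm.coe_inv, symm_apply_apply] at key
  rw [dKT, key, numInv]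
  refine congrArg card (filter_congr fun p _ => ?_)
  have := (σ * π⁻¹).injective.eq_iff (a := p.1) (b := p.2)
  simp only [Perm.mul_apply, Perm.coe_inv] at this ⊢
  grind

theorem sum_comp_dKT (π : Perm (Fin n)) (g : ℕ → ℝ) :
    ∑ σ, g (dKT π σ) = ∑ τ : Perm (Fin n), g (numInv τ) :=
  Fintype.sum_equiv (Equiv.mulRight π⁻¹) _ _ fun σ => by rw [dKT_eq_numInv]; rfl

theorem dTV_comm (P Q : Perm (Fin n) → ℝ) : dTV P Q = dTV Q P := by
  simp only [dTV, abs_sub_comm]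

theorem sum_abs_div_sum_sub_div_sum_le {ι : Type*} [Fintype ι] {f g : ι → ℝ} (hg : 0 ≤ g)
    (hgf : g ≤ f) (hg_sum : 0 < ∑ i, g i) :
    ∑ i, |f i / ∑ j, f j - g i / ∑ j, g j| ≤ 2 * ((∑ i, f i - ∑ i, g i) / ∑ i, f i) := by
  set A := ∑ i, f i
  set B := ∑ i, g i
  have hBA : B ≤ A := sum_le_sum fun i _ => hgf i
  have hA : 0 < A := hg_sum.trans_le hBA
  have hdecomp (i : ι) : f i / A - g i / B = (f i - g i) / A - g i * ((A - B) / (A * B)) := by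
    field_simp
    ring
  calc ∑ i, |f i / A - g i / B|
      ≤ ∑ i, ((f i - g i) / A + g i * ((A - B) / (A * B))) := by
        refine sum_le_sum fun i _ => ?_
        rw [hdecomp]
        refine (abs_sub _ _).trans_eq ?_
        rw [abs_of_nonneg (div_nonneg (sub_nonneg.2 (hgf i)) hA.le),
          abs_of_nonneg (mul_nonneg (hg i) (div_nonneg (sub_nonneg.2 hBA) (by positivity)))]
    _ = 2 * ((A - B) / A) := by
        rw [sum_add_distrib, ← sum_div, ← sum_mul, sum_sub_distrib]
        field_simp
        ring

theorem pow_sub_pow_le_of_le {x y : ℝ} (hy : 0 ≤ y) (hyx : y ≤ x) (k : ℕ) :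
    x ^ k - y ^ k ≤ (x - y) * k * x ^ (k - 1) := by
  have h := abs_pow_sub_pow_le x y k
  rwa [abs_of_nonneg (sub_nonneg.2 (pow_le_pow_left₀ hy hyx k)), abs_of_nonneg (sub_nonneg.2 hyx),
    abs_of_nonneg (hy.trans hyx), abs_of_nonneg hy, max_eq_left hyx] at h

theorem dTV_mallows_le_of_le (π : Perm (Fin n)) {φ₁ φ₂ : ℝ} (hφ₂ : 0 ≤ φ₂) (h : φ₂ ≤ φ₁)
    (hφ₁ : φ₁ ≤ 1) : dTV (mallows φ₁ π) (mallows φ₂ π) ≤ (φ₁ - φ₂) * n ^ 2 := by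
  set A := ∑ σ, φ₁ ^ dKT π σ
  set B := ∑ σ, φ₂ ^ dKT π σ
  have hB : 0 < B := by
    refine lt_of_lt_of_le ?_ (single_le_sum (fun σ _ => pow_nonneg hφ₂ (dKT π σ)) (mem_univ π))
    simp [dKT]
  have hA : 0 < A := hB.trans_le (sum_le_sum fun σ _ => pow_le_pow_left₀ hφ₂ h _)
  have hAB : A - B ≤ (φ₁ - φ₂) * n ^ 2 * A :=
    calc A - B ≤ ∑ σ, (φ₁ - φ₂) * (dKT π σ * φ₁ ^ (dKT π σ - 1)) := by
          rw [← sum_sub_distrib]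
          refine sum_le_sum fun σ _ => (pow_sub_pow_le_of_le hφ₂ h _).trans_eq (by ring)
      _ = (φ₁ - φ₂) * ∑ τ : Perm (Fin n), numInv τ * φ₁ ^ (numInv τ - 1) := by
          rw [← mul_sum, sum_comp_dKT π fun k => (k : ℝ) * φ₁ ^ (k - 1)]
      _ ≤ (φ₁ - φ₂) * (n ^ 2 * ∑ τ : Perm (Fin n), φ₁ ^ numInv τ) := by
          gcongr
          have := sum_card_inversions_mul_pow_le (α := Fin n) (hφ₂.trans h) hφ₁
          rwa [Fintype.card_fin] at this
      _ = (φ₁ - φ₂) * n ^ 2 * A := by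
          rw [show A = _ from sum_comp_dKT π fun k => φ₁ ^ k]
          ring
  calc dTV (mallows φ₁ π) (mallows φ₂ π) ≤ (A - B) / A := by
        have := sum_abs_div_sum_sub_div_sum_le (f := fun σ => φ₁ ^ dKT π σ)
          (g := fun σ => φ₂ ^ dKT π σ) (fun σ => pow_nonneg hφ₂ _)
          (fun σ => pow_le_pow_left₀ hφ₂ h _) hB
        rw [dTV]
        unfold mallows
        linarith
    _ ≤ (φ₁ - φ₂) * n ^ 2 := by rwa [div_le_iff₀ hA]

theorem dTV_mallows_le (π : Perm (Fin n)) {φ₁ φ₂ : ℝ} (hφ₁0 : 0 ≤ φ₁) (hφ₁ : φ₁ ≤ 1)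
    (hφ₂0 : 0 ≤ φ₂) (hφ₂ : φ₂ ≤ 1) :
    dTV (mallows φ₁ π) (mallows φ₂ π) ≤ |φ₁ - φ₂| * n ^ 2 := by
  rcases le_total φ₂ φ₁ with h | h
  · exact (dTV_mallows_le_of_le π hφ₂0 h hφ₁).trans_eq (by rw [abs_of_nonneg (sub_nonneg.2 h)])
  · rw [dTV_comm, abs_sub_comm]
    exact (dTV_mallows_le_of_le π hφ₁0 h hφ₂).trans_eq (by rw [abs_of_nonneg (sub_nonneg.2 h)])

end Mallows

theorem tv_upper_bound_same_center_general (n : ℕ) (π : Equiv.Perm (Fin n))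
    (μ φ₁ φ₂ : ℝ) (hμ0 : 0 < μ) (hμ1 : μ ≤ 1)
    (hφ₁0 : 0 ≤ φ₁) (hφ₁ : φ₁ < 1) (hφ₂0 : 0 ≤ φ₂) (hφ₂ : φ₂ < 1)
    (hd : |φ₁ - φ₂| ≤ μ ^ 2 / (10 * (n : ℝ) ^ 3)) :
    dTV (mallows φ₁ π) (mallows φ₂ π) ≤ μ := by
  calc dTV (mallows φ₁ π) (mallows φ₂ π) ≤ |φ₁ - φ₂| * n ^ 2 :=
        dTV_mallows_le π hφ₁0 hφ₁.le hφ₂0 hφ₂.le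
    _ ≤ μ ^ 2 / (10 * (n : ℝ) ^ 3) * n ^ 2 := by gcongr
    _ ≤ μ := by
        rcases n.eq_zero_or_pos with rfl | hn
        · simpa using hμ0.le
        have hn1 : (1 : ℝ) ≤ n := by exact_mod_cast hn
        rw [div_mul_eq_mul_div, div_le_iff₀ (by positivity)]
        nlinarith [mul_le_mul_of_nonneg_right hμ1 hμ0.le,
          pow_le_pow_right₀ hn1 (by norm_num : 2 ≤ 3)]

/-- **Lemma 3.6 of Liu–Moitra.** Two Mallows models on `n ≥ 2` elements with the same
base permutation and scaling parameters `φ₁, φ₂ ∈ [0,1)` with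
`|φ₁ - φ₂| ≤ μ²/(10n³)` are within total variation distance `μ`. -/
theorem tv_upper_bound_same_center (n : ℕ) (hn : 2 ≤ n) (π : Equiv.Perm (Fin n))
    (μ φ₁ φ₂ : ℝ) (hμ0 : 0 < μ) (hμ1 : μ ≤ 1)
    (hφ₁0 : 0 ≤ φ₁) (hφ₁ : φ₁ < 1) (hφ₂0 : 0 ≤ φ₂) (hφ₂ : φ₂ < 1)
    (hd : |φ₁ - φ₂| ≤ μ ^ 2 / (10 * (n : ℝ) ^ 3)) :
    dTV (mallows φ₁ π) (mallows φ₂ π) ≤ μ :=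
  tv_upper_bound_same_center_general n π μ φ₁ φ₂ hμ0 hμ1 hφ₁0 hφ₁ hφ₂0 hφ₂ hd
end

section
/- Let M(φ, π*) be a Mallows model on permutations of [n] with 0 ≤ φ ≤ 1, and let B = (S_1, …, S_j) be a block structure (an ordered collection of pairwise disjoint subsets of [n]) with ℓ = |S_1| + ⋯ + |S_j|. If π* satisfies B, then the probability that a permutation π drawn from M(φ, π*) satisfies B is at least 1/n^{2ℓ}. -/
open Finset

/-- A permutation `σ` of `[n]` satisfies the block structure `B = (S_1, …, S_j)` if for
each `i` the elements of `S i` occupy consecutive positions under `σ`, and the blocks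
occur in the order `S 0, S 1, …`. -/
def satisfiesBlock {n j : ℕ} (σ : Equiv.Perm (Fin n)) (S : Fin j → Finset (Fin n)) :
    Prop :=
  ∃ a : Fin j → ℕ,
    (∀ i, (S i).image (fun x => ((σ x : ℕ))) = Finset.Ico (a i) (a i + (S i).card)) ∧
    (∀ i₁ i₂ : Fin j, i₁ < i₂ → a i₁ + (S i₁).card ≤ a i₂)

/-! Let `L` be the union of the blocks. From any `τ` build `reinsert π* τ L`: the elements
outside `L` keep their `τ`-order, and the elements of `L` are put in `π*`-order, each one
inserted at a slot of `τ` minimising its discordances with the elements outside `L`. Pairs inside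
`L` become concordant, pairs outside `L` are untouched and mixed pairs do not increase, so the
Kendall-Tau distance to `π*` does not increase. Since `π*` places a block contiguously, all its
elements have the same cost function, and the greatest minimiser is monotone in the `π*`-value
(the costs have decreasing differences), so the result satisfies `B`. Since `τ` is recovered
from its image and its values on `L`, the map is at most `n^|L|`-to-one. Hence the partition
function is at most `n^|L|` times its part over permutations satisfying `B`, and `|L| ≤ ℓ`. -/

section Rank

variable {α β : Type*} [LinearOrder β] (k : α → β) (s : Finset α)

lemma card_filter_lt_le_card_filter_lt {x y : α} (h : k x ≤ k y) :
    #{z ∈ s | k z < k x} ≤ #{z ∈ s | k z < k y} :=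
  card_le_card <| monotone_filter_right _ fun _ _ hz => hz.trans_le h

lemma card_filter_lt_lt_card_filter_lt_iff {x y : α} (hx : x ∈ s) :
    #{z ∈ s | k z < k x} < #{z ∈ s | k z < k y} ↔ k x < k y := by
  refine ⟨fun h => lt_of_not_ge fun h' => (card_filter_lt_le_card_filter_lt k s h').not_gt h,
    fun h => card_lt_card <| (ssubset_iff_of_subset ?_).2 ⟨x, ?_, ?_⟩⟩
  · exact monotone_filter_right _ fun _ _ hz => hz.trans h
  · simpa [hx] using h
  · simp

lemma eq_of_card_filter_lt_eq {x y : α} (hx : x ∈ s) (hy : y ∈ s)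
    (h : #{z ∈ s | k z < k x} = #{z ∈ s | k z < k y}) : k x = k y := by
  rcases lt_trichotomy (k x) (k y) with hlt | heq | hgt
  · exact absurd h ((card_filter_lt_lt_card_filter_lt_iff k s hx).2 hlt).ne
  · exact heq
  · exact absurd h ((card_filter_lt_lt_card_filter_lt_iff k s hy).2 hgt).ne'

/-- Both maps send `x` to the element of rank `#{y ∈ s | g y < g x}` of the common image. -/
lemma eqOn_of_image_eq_of_lt_iff_lt [DecidableEq β] {g h : α → β} (hg : Set.InjOn g s)
    (hh : Set.InjOn h s) (himg : s.image g = s.image h)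
    (hlt : ∀ x ∈ s, ∀ y ∈ s, g y < g x ↔ h y < h x) : Set.EqOn g h s := by
  intro x hx
  have hrank {f : α → β} (hf : Set.InjOn f s) :
      #{v ∈ s.image f | v < f x} = #{y ∈ s | f y < f x} := by
    rw [filter_image, card_image_of_injOn (hf.mono (coe_subset.2 (filter_subset _ _)))]
  refine eq_of_card_filter_lt_eq id (s.image g) (Finset.mem_image_of_mem g hx)
    (himg ▸ Finset.mem_image_of_mem h hx) ?_
  simp only [id]
  rw [hrank hg, himg, hrank hh]
  exact congrArg card (filter_congr fun y hy => hlt x hx y hy)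

end Rank

section RankPerm

variable {β : Type*} [LinearOrder β] {n : ℕ} {k : Fin n → β}

noncomputable def rankPerm (hk : Function.Injective k) : Equiv.Perm (Fin n) :=
  Equiv.ofBijective
    (fun x => ⟨#{z | k z < k x}, by
      simpa using card_lt_card (filter_ssubset.2 ⟨x, mem_univ x, lt_irrefl (k x)⟩)⟩) <|
    Finite.injective_iff_bijective.1 fun x y hxy =>
      hk <| eq_of_card_filter_lt_eq k univ (mem_univ x) (mem_univ y) (Fin.mk.inj hxy)

lemma rankPerm_apply (hk : Function.Injective k) (x : Fin n) :
    (rankPerm hk x : ℕ) = #{z | k z < k x} := rfl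

lemma rankPerm_lt_rankPerm_iff (hk : Function.Injective k) {x y : Fin n} :
    rankPerm hk x < rankPerm hk y ↔ k x < k y := by
  rw [Fin.lt_def, rankPerm_apply, rankPerm_apply]
  exact card_filter_lt_lt_card_filter_lt_iff k univ (mem_univ x)

end RankPerm

section GreatestArgmin

variable (c : ℕ → ℕ) (N : ℕ)

def greatestArgmin : ℕ := Nat.findGreatest (fun k => ∀ k' ≤ N, c k ≤ c k') N

lemma greatestArgmin_le : greatestArgmin c N ≤ N := Nat.findGreatest_le N

lemma greatestArgmin_isMin : ∀ k ≤ N, c (greatestArgmin c N) ≤ c k := by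
  obtain ⟨k, hk, hmin⟩ := exists_min_image (range (N + 1)) c nonempty_range_add_one
  exact Nat.findGreatest_spec (P := fun k => ∀ k' ≤ N, c k ≤ c k') (by simpa using hk)
    fun k' hk' => hmin k' (by simpa [Nat.lt_succ_iff] using hk')

variable {c N}

lemma le_greatestArgmin {k : ℕ} (hk : k ≤ N) (h : ∀ k' ≤ N, c k ≤ c k') :
    k ≤ greatestArgmin c N :=
  Nat.le_findGreatest hk h

lemma greatestArgmin_le_greatestArgmin {c' : ℕ → ℕ}
    (h : ∀ ⦃p' p⦄, p' ≤ p → c' p + c p' ≤ c p + c' p') :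
    greatestArgmin c N ≤ greatestArgmin c' N := by
  by_contra! hlt
  have hsub := h hlt.le
  have hmin := greatestArgmin_isMin c N (greatestArgmin c' N) (greatestArgmin_le c' N)
  refine hlt.not_ge (le_greatestArgmin (greatestArgmin_le c N) fun k hk => ?_)
  have := greatestArgmin_isMin c' N k hk
  omega

end GreatestArgmin

section SymmetricRelation

variable {α : Type*} [Fintype α] {r : α → α → Prop} [DecidableRel r]

lemma card_filter_prod_eq_sum_card_filter :
    #{p : α × α | r p.1 p.2} = ∑ x, #{y | r x y} := by
  simp only [card_filter, Fintype.sum_prod_type]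

variable [DecidableEq α]

lemma card_filter_prod_eq_of_symm (hr : ∀ x y, r x y ↔ r y x) (s : Finset α) :
    #{p : α × α | r p.1 p.2} = ∑ x ∈ s, #{y ∈ s | r x y} + ∑ x ∈ sᶜ, #{y ∈ sᶜ | r x y} +
      2 * ∑ x ∈ s, #{y ∈ sᶜ | r x y} := by
  have hrow (x : α) : #{y | r x y} = #{y ∈ s | r x y} + #{y ∈ sᶜ | r x y} := by
    simp only [card_filter, sum_add_sum_compl]
  have hcross : ∑ x ∈ sᶜ, #{y ∈ s | r x y} = ∑ x ∈ s, #{y ∈ sᶜ | r x y} := by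
    simp only [card_filter]
    rw [sum_comm]
    simp only [hr]
  rw [card_filter_prod_eq_sum_card_filter, ← sum_add_sum_compl s]
  simp only [hrow, sum_add_distrib]
  omega

lemma card_filter_prod_le_of_symm {r' : α → α → Prop} [DecidableRel r']
    (hr : ∀ x y, r x y ↔ r y x) (hr' : ∀ x y, r' x y ↔ r' y x) (s : Finset α)
    (hin : ∀ x ∈ s, ∀ y ∈ s, r x y → r' x y) (hout : ∀ x ∉ s, ∀ y ∉ s, r x y → r' x y)
    (hcross : ∀ x ∈ s, #{y ∈ sᶜ | r x y} ≤ #{y ∈ sᶜ | r' x y}) :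
    #{p : α × α | r p.1 p.2} ≤ #{p : α × α | r' p.1 p.2} := by
  rw [card_filter_prod_eq_of_symm hr s, card_filter_prod_eq_of_symm hr' s]
  have h_in : ∑ x ∈ s, #{y ∈ s | r x y} ≤ ∑ x ∈ s, #{y ∈ s | r' x y} :=
    sum_le_sum fun x hx => card_le_card <| monotone_filter_right _ fun y hy => hin x hx y hy
  have h_out : ∑ x ∈ sᶜ, #{y ∈ sᶜ | r x y} ≤ ∑ x ∈ sᶜ, #{y ∈ sᶜ | r' x y} :=
    sum_le_sum fun x hx => card_le_card <| monotone_filter_right _ fun y hy =>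
      hout x (mem_compl.1 hx) y (mem_compl.1 hy)
  have h_cross := sum_le_sum hcross
  omega

end SymmetricRelation

section Discordance

variable {n : ℕ}

def discordant (π σ : Equiv.Perm (Fin n)) (x y : Fin n) : Prop :=
  ¬((π x < π y) ↔ (σ x < σ y))

instance (π σ : Equiv.Perm (Fin n)) : DecidableRel (discordant π σ) := fun _ _ => by
  unfold discordant; infer_instance

variable {π σ : Equiv.Perm (Fin n)}

lemma discordant_comm (x y : Fin n) : discordant π σ x y ↔ discordant π σ y x := by
  unfold discordant
  rcases eq_or_ne x y with rfl | hxy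
  · rfl
  · have := π.injective.ne hxy
    have := σ.injective.ne hxy
    omega

lemma ne_of_discordant {x y : Fin n} (h : discordant π σ x y) : x ≠ y := by
  rintro rfl; exact h (iff_of_false (lt_irrefl _) (lt_irrefl _))

lemma two_mul_dKT : 2 * dKT π σ = #{p : Fin n × Fin n | discordant π σ p.1 p.2} := by
  have hswap : #{p : Fin n × Fin n | discordant π σ p.1 p.2 ∧ p.1 < p.2} =
      #{p : Fin n × Fin n | discordant π σ p.1 p.2 ∧ ¬ p.1 < p.2} := by
    refine card_nbij' Prod.swap Prod.swap ?_ ?_ (fun _ _ => rfl) (fun _ _ => rfl) <;>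
    · rintro ⟨x, y⟩ h
      simp only [coe_filter, mem_univ, true_and, Set.mem_ofPred_eq, Prod.swap] at h ⊢
      have := ne_of_discordant h.1
      exact ⟨(discordant_comm _ _).1 h.1, by omega⟩
  rw [← card_filter_add_card_filter_not (p := fun p : Fin n × Fin n => p.1 < p.2),
    filter_filter, filter_filter, ← hswap, two_mul, dKT]
  simp only [discordant, and_comm]

lemma dKT_le_dKT_of_card_filter_le {τ : Equiv.Perm (Fin n)}
    (h : #{p : Fin n × Fin n | discordant π σ p.1 p.2} ≤
      #{p : Fin n × Fin n | discordant π τ p.1 p.2}) : dKT π σ ≤ dKT π τ := by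
  have := two_mul_dKT (π := π) (σ := σ)
  have := two_mul_dKT (π := π) (σ := τ)
  omega

end Discordance

section Reinsert

variable {n : ℕ} (π τ : Equiv.Perm (Fin n)) (L : Finset (Fin n))

/-- The number of elements outside `L` that are discordant, relative to `π`, with an element of
`π`-value `t` placed just before the `τ`-slot `p`. -/
def slotCost (t p : ℕ) : ℕ := #{y ∈ Lᶜ | ¬((π y : ℕ) < t ↔ (τ y : ℕ) < p)}

def slot (t : ℕ) : ℕ := greatestArgmin (slotCost π τ L t) n

/-- Outside `L` the order of `τ` is kept; the elements of `L` are sorted by `π`, an element of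
`π`-value `t` going just before the `τ`-slot `slot π τ L t`. The second coordinate `n` places an
element outside `L` after the inserted ones sharing its slot. -/
def reinsertKey (x : Fin n) : ℕ ×ₗ ℕ :=
  if x ∈ L then toLex (slot π τ L (π x), (π x : ℕ)) else toLex ((τ x : ℕ), n)

lemma slotCost_add_slotCost_le {t t' p p' : ℕ} (ht : t ≤ t') (hp : p' ≤ p) :
    slotCost π τ L t' p + slotCost π τ L t p' ≤ slotCost π τ L t p + slotCost π τ L t' p' := by
  simp only [slotCost, card_filter, ← sum_add_distrib]
  refine sum_le_sum fun y _ => ?_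
  split_ifs <;> omega

lemma slot_mono : Monotone (slot π τ L) := fun _ _ ht =>
  greatestArgmin_le_greatestArgmin fun _ _ hp => slotCost_add_slotCost_le π τ L ht hp

variable {π τ L}

lemma reinsertKey_of_mem {x : Fin n} (hx : x ∈ L) :
    reinsertKey π τ L x = toLex (slot π τ L (π x), (π x : ℕ)) := if_pos hx

lemma reinsertKey_of_notMem {x : Fin n} (hx : x ∉ L) :
    reinsertKey π τ L x = toLex ((τ x : ℕ), n) := if_neg hx

lemma reinsertKey_lt_iff_of_mem {x y : Fin n} (hx : x ∈ L) (hy : y ∈ L) :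
    reinsertKey π τ L x < reinsertKey π τ L y ↔ π x < π y := by
  have hmono := slot_mono π τ L (a := π x) (b := π y)
  have hmono' := slot_mono π τ L (a := π y) (b := π x)
  rw [reinsertKey_of_mem hx, reinsertKey_of_mem hy, Prod.Lex.toLex_lt_toLex]
  constructor
  · rintro (h | ⟨-, h⟩)
    · by_contra h'
      exact (hmono' (by omega)).not_gt h
    · exact h
  · intro h
    rcases (hmono h.le).lt_or_eq with h' | h'
    · exact Or.inl h'
    · exact Or.inr ⟨h', h⟩

lemma reinsertKey_lt_iff_of_notMem {x y : Fin n} (hx : x ∉ L) (hy : y ∉ L) :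
    reinsertKey π τ L x < reinsertKey π τ L y ↔ τ x < τ y := by
  simp [reinsertKey_of_notMem hx, reinsertKey_of_notMem hy, Prod.Lex.toLex_lt_toLex]

lemma reinsertKey_lt_iff_of_notMem_of_mem {x y : Fin n} (hy : y ∉ L) (hx : x ∈ L) :
    reinsertKey π τ L y < reinsertKey π τ L x ↔ (τ y : ℕ) < slot π τ L (π x) := by
  have := (π x).isLt
  rw [reinsertKey_of_notMem hy, reinsertKey_of_mem hx, Prod.Lex.toLex_lt_toLex]
  omega

variable (π τ L)

lemma reinsertKey_injective : Function.Injective (reinsertKey π τ L) := by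
  intro x y h
  by_cases hx : x ∈ L <;> by_cases hy : y ∈ L <;>
    simp only [reinsertKey_of_mem, reinsertKey_of_notMem, hx, hy, not_false_eq_true,
      EmbeddingLike.apply_eq_iff_eq, Prod.mk.injEq] at h
  · exact π.injective (Fin.ext h.2)
  · exact absurd h.2 (π x).isLt.ne
  · exact absurd h.2.symm (π y).isLt.ne
  · exact τ.injective (Fin.ext h.1)

noncomputable def reinsert : Equiv.Perm (Fin n) := rankPerm (reinsertKey_injective π τ L)

variable {π τ L}

lemma reinsert_lt_reinsert_iff {x y : Fin n} :
    reinsert π τ L x < reinsert π τ L y ↔ reinsertKey π τ L x < reinsertKey π τ L y :=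
  rankPerm_lt_rankPerm_iff _

lemma card_filter_discordant_eq_slotCost {σ : Equiv.Perm (Fin n)} {x : Fin n} {p : ℕ}
    (h : ∀ y ∉ L, σ y < σ x ↔ (τ y : ℕ) < p) :
    #{y ∈ Lᶜ | discordant π σ x y} = slotCost π τ L (π x) p := by
  refine congrArg card (filter_congr fun y hy => ?_)
  rw [mem_compl] at hy
  rw [discordant_comm, discordant, ← h y hy, Fin.lt_def]

lemma dKT_reinsert_le : dKT π (reinsert π τ L) ≤ dKT π τ := by
  refine dKT_le_dKT_of_card_filter_le <|
    card_filter_prod_le_of_symm discordant_comm discordant_comm L ?_ ?_ ?_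
  · intro x hx y hy h
    exact absurd (by rw [reinsert_lt_reinsert_iff, reinsertKey_lt_iff_of_mem hx hy]) h
  · intro x hx y hy
    rw [discordant, discordant, reinsert_lt_reinsert_iff, reinsertKey_lt_iff_of_notMem hx hy]
    exact id
  · intro x hx
    rw [card_filter_discordant_eq_slotCost fun y hy => by
        rw [reinsert_lt_reinsert_iff, reinsertKey_lt_iff_of_notMem_of_mem hy hx],
      card_filter_discordant_eq_slotCost fun y _ => Fin.lt_def]
    exact greatestArgmin_isMin _ _ _ (τ x).isLt.le

lemma eq_of_reinsert_eq {τ' : Equiv.Perm (Fin n)} (h : reinsert π τ L = reinsert π τ' L)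
    (hL : ∀ x ∈ L, τ x = τ' x) : τ = τ' := by
  have himg_compl (σ : Equiv.Perm (Fin n)) : Lᶜ.image σ = (L.image σ)ᶜ := by
    ext v
    simp [← Equiv.eq_symm_apply]
  have himg : Lᶜ.image τ = Lᶜ.image τ' := by
    rw [himg_compl, himg_compl, image_congr hL]
  have hcompl := eqOn_of_image_eq_of_lt_iff_lt Lᶜ τ.injective.injOn τ'.injective.injOn himg
    fun x hx y hy => by
      rw [mem_compl] at hx hy
      rw [← reinsertKey_lt_iff_of_notMem hy hx, ← reinsert_lt_reinsert_iff, h,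
        reinsert_lt_reinsert_iff, reinsertKey_lt_iff_of_notMem hy hx]
  ext1 x
  by_cases hx : x ∈ L
  · exact hL x hx
  · exact hcompl (mem_compl.2 hx)

lemma card_filter_reinsert_eq_le (σ : Equiv.Perm (Fin n)) :
    #{τ | reinsert π τ L = σ} ≤ n ^ #L := by
  calc #{τ | reinsert π τ L = σ}
      ≤ #(univ : Finset (L → Fin n)) := by
        refine card_le_card_of_injOn (fun τ x => τ x) (fun _ _ => mem_coe.2 (mem_univ _)) ?_
        intro τ hτ τ' hτ' hres
        simp only [coe_filter, mem_univ, true_and, Set.mem_ofPred_eq] at hτ hτ'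
        exact eq_of_reinsert_eq (hτ.trans hτ'.symm) fun x hx => congrFun hres ⟨x, hx⟩
    _ = n ^ #L := by simp

end Reinsert

section Blocks

variable {n j : ℕ} {S : Fin j → Finset (Fin n)}

/-- Block `i` starts at position `#{z | k z < d i}`. -/
lemma satisfiesBlock_rankPerm {β : Type*} [LinearOrder β] {k : Fin n → β}
    (hk : Function.Injective k) (d : Fin j → β) (hd : Monotone d)
    (hge : ∀ i, ∀ x ∈ S i, d i ≤ k x) (hlt : ∀ i i', i < i' → ∀ x ∈ S i, k x < d i')
    (hgap : ∀ i, ∀ x ∈ S i, ∀ z ∉ S i, k z < k x → k z < d i) :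
    satisfiesBlock (rankPerm hk) S := by
  refine ⟨fun i => #{z | k z < d i}, fun i => ?_, fun i i' h => ?_⟩
  · have hbounds : ∀ x ∈ S i,
        (rankPerm hk x : ℕ) ∈ Ico #{z | k z < d i} (#{z | k z < d i} + #(S i)) := by
      intro x hx
      rw [mem_Ico, rankPerm_apply]
      constructor
      · exact card_le_card <| monotone_filter_right _ fun z _ hz => hz.trans_le (hge i x hx)
      · calc #{z | k z < k x} ≤ #(({z | k z < d i} : Finset (Fin n)) ∪ (S i).erase x) := by
              refine card_le_card fun z hz => ?_
              simp only [mem_filter, mem_univ, true_and, mem_union, mem_erase] at hz ⊢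
              by_cases hzS : z ∈ S i
              · exact Or.inr ⟨fun h => hz.ne (congrArg k h), hzS⟩
              · exact Or.inl (hgap i x hx z hzS hz)
          _ ≤ #{z | k z < d i} + #((S i).erase x) := card_union_le _ _
          _ < #{z | k z < d i} + #(S i) := by
              rw [card_erase_of_mem hx]
              have := card_pos.2 ⟨x, hx⟩
              omega
    refine eq_of_subset_of_card_le (fun v hv => ?_) ?_
    · obtain ⟨x, hx, rfl⟩ := mem_image.1 hv
      exact hbounds x hx
    · rw [Nat.card_Ico, add_tsub_cancel_left]
      exact (card_image_of_injective _ (Fin.val_injective.comp (rankPerm hk).injective)).ge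
  · have hdisj : Disjoint ({z | k z < d i} : Finset (Fin n)) (S i) :=
      disjoint_left.2 fun z hz hzS => (mem_filter.1 hz).2.not_ge (hge i z hzS)
    calc #{z | k z < d i} + #(S i) = #(({z | k z < d i} : Finset (Fin n)) ∪ S i) :=
          (card_union_of_disjoint hdisj).symm
      _ ≤ #{z | k z < d i'} := by
        refine card_le_card fun z hz => ?_
        simp only [mem_filter, mem_univ, true_and, mem_union] at hz ⊢
        rcases hz with hz | hz
        · exact hz.trans_le (hd h.le)
        · exact hlt i i' h z hz

variable {π : Equiv.Perm (Fin n)} {a : Fin j → ℕ}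

lemma val_mem_Ico_iff (ha : ∀ i, (S i).image (fun x => (π x : ℕ)) = Ico (a i) (a i + #(S i)))
    (i : Fin j) (z : Fin n) :
    (π z : ℕ) ∈ Ico (a i) (a i + #(S i)) ↔ z ∈ S i := by
  rw [← ha i, mem_image]
  exact ⟨fun ⟨x, hx, hxz⟩ => π.injective (Fin.ext hxz) ▸ hx, fun hz => ⟨z, hz, rfl⟩⟩

lemma slot_eq_slot_of_mem
    (ha : ∀ i, (S i).image (fun x => (π x : ℕ)) = Ico (a i) (a i + #(S i)))
    {τ : Equiv.Perm (Fin n)} {L : Finset (Fin n)} {i : Fin j} (hL : S i ⊆ L) {x : Fin n}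
    (hx : x ∈ S i) : slot π τ L (π x) = slot π τ L (a i) := by
  have hxI := mem_Ico.1 ((val_mem_Ico_iff ha i x).2 hx)
  refine congrArg (greatestArgmin · n) <| funext fun p =>
    congrArg card <| filter_congr fun y hy => ?_
  have hyI := mt (val_mem_Ico_iff ha i y).1 fun hyS => mem_compl.1 hy (hL hyS)
  rw [mem_Ico] at hyI
  have hthreshold : (π y : ℕ) < π x ↔ (π y : ℕ) < a i := by omega
  rw [hthreshold]

lemma satisfiesBlock_reinsert (hπ : satisfiesBlock π S) (τ : Equiv.Perm (Fin n)) :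
    satisfiesBlock (reinsert π τ (univ.biUnion S)) S := by
  obtain ⟨a, ha, hord⟩ := hπ
  set L := univ.biUnion S
  have hsub (i : Fin j) : S i ⊆ L := subset_biUnion_of_mem S (mem_univ i)
  have hIco (i : Fin j) {x : Fin n} (hx : x ∈ S i) := mem_Ico.1 ((val_mem_Ico_iff ha i x).2 hx)
  have ha_mono : Monotone a := fun i i' h => by
    rcases h.lt_or_eq with h | rfl
    · exact (Nat.le_add_right _ _).trans (hord i i' h)
    · exact le_rfl
  refine satisfiesBlock_rankPerm _ (fun i => toLex (slot π τ L (a i), a i))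
    (fun i i' h => Prod.Lex.toLex_mono ⟨slot_mono π τ L (ha_mono h), ha_mono h⟩) ?_ ?_ ?_
  · intro i x hx
    rw [reinsertKey_of_mem (hsub i hx), slot_eq_slot_of_mem ha (hsub i) hx]
    exact Prod.Lex.toLex_mono ⟨le_rfl, (hIco i hx).1⟩
  · intro i i' h x hx
    have := hIco i hx
    have := hord i i' h
    rw [reinsertKey_of_mem (hsub i hx), slot_eq_slot_of_mem ha (hsub i) hx]
    exact Prod.Lex.toLex_strictMono
      (Prod.mk_lt_mk_of_le_of_lt (slot_mono π τ L (ha_mono h.le)) (by omega))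
  · intro i x hx z hz hzx
    by_cases hzL : z ∈ L
    · rw [reinsertKey_lt_iff_of_mem hzL (hsub i hx), Fin.lt_def] at hzx
      have := hIco i hx
      have hzI := mt (val_mem_Ico_iff ha i z).1 hz
      rw [mem_Ico] at hzI
      have hza : (π z : ℕ) < a i := by omega
      rw [reinsertKey_of_mem hzL]
      exact Prod.Lex.toLex_strictMono (Prod.mk_lt_mk_of_le_of_lt (slot_mono π τ L hza.le) hza)
    · rw [reinsertKey_lt_iff_of_notMem_of_mem hzL (hsub i hx),
        slot_eq_slot_of_mem ha (hsub i) hx] at hzx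
      rw [reinsertKey_of_notMem hzL, Prod.Lex.toLex_lt_toLex]
      exact Or.inl hzx

end Blocks

open scoped Classical in
lemma sum_pow_dKT_le_mul_sum_satisfiesBlock {n j : ℕ} {S : Fin j → Finset (Fin n)} {φ : ℝ}
    (hφ0 : 0 ≤ φ) (hφ1 : φ ≤ 1) {π : Equiv.Perm (Fin n)} (hπ : satisfiesBlock π S) :
    ∑ τ, φ ^ dKT π τ ≤
      (n : ℝ) ^ #(univ.biUnion S) * ∑ σ, if satisfiesBlock σ S then φ ^ dKT π σ else 0 := by
  set L := univ.biUnion S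
  calc ∑ τ, φ ^ dKT π τ
      ≤ ∑ τ, φ ^ dKT π (reinsert π τ L) :=
        sum_le_sum fun τ _ => pow_le_pow_of_le_one hφ0 hφ1 dKT_reinsert_le
    _ = ∑ σ, ∑ τ with reinsert π τ L = σ, φ ^ dKT π σ := by
        rw [← sum_fiberwise univ (reinsert π · L)]
        exact sum_congr rfl fun σ _ => sum_congr rfl fun τ hτ => by rw [(mem_filter.1 hτ).2]
    _ ≤ ∑ σ, (n : ℝ) ^ #L * if satisfiesBlock σ S then φ ^ dKT π σ else 0 := by
        refine sum_le_sum fun σ _ => ?_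
        rw [sum_const, nsmul_eq_mul]
        split_ifs with hσ
        · exact mul_le_mul_of_nonneg_right (by exact_mod_cast card_filter_reinsert_eq_le σ)
            (pow_nonneg hφ0 _)
        · have : #{τ | reinsert π τ L = σ} = 0 := card_eq_zero.2 <| filter_eq_empty_iff.2
            fun τ _ hτ => hσ (hτ ▸ satisfiesBlock_reinsert hπ τ)
          simp [this]
    _ = (n : ℝ) ^ #L * ∑ σ, if satisfiesBlock σ S then φ ^ dKT π σ else 0 := (mul_sum ..).symm

lemma dKT_self {n : ℕ} (π : Equiv.Perm (Fin n)) : dKT π π = 0 := by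
  simp [dKT]

open scoped Classical in
theorem block_probability_lower_bound_general (n j : ℕ) (φ : ℝ) (hφ0 : 0 ≤ φ) (hφ1 : φ ≤ 1)
    (S : Fin j → Finset (Fin n))
    (πstar : Equiv.Perm (Fin n)) (hsat : satisfiesBlock πstar S) :
    (1 : ℝ) / (n : ℝ) ^ (2 * ∑ i, (S i).card) ≤
      ∑ σ : Equiv.Perm (Fin n),
        if satisfiesBlock σ S then mallows φ πstar σ else 0 := by
  set Z := ∑ τ, φ ^ dKT πstar τ
  have hZ : 0 < Z := by
    refine lt_of_lt_of_le one_pos ?_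
    simpa [dKT_self] using single_le_sum (fun τ _ => pow_nonneg hφ0 (dKT πstar τ)) (mem_univ πstar)
  have hprob : (∑ σ, if satisfiesBlock σ S then mallows φ πstar σ else 0) =
      (∑ σ, if satisfiesBlock σ S then φ ^ dKT πstar σ else 0) / Z := by
    rw [sum_div]
    exact sum_congr rfl fun σ _ => by split_ifs <;> simp [mallows, Z]
  obtain ⟨hN, hpow⟩ : 0 < (n : ℝ) ^ (2 * ∑ i, #(S i)) ∧
      (n : ℝ) ^ #(univ.biUnion S) ≤ (n : ℝ) ^ (2 * ∑ i, #(S i)) := by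
    rcases n.eq_zero_or_pos with rfl | hn
    · simp [eq_empty_of_isEmpty]
    · exact ⟨by positivity,
        pow_le_pow_right₀ (by exact_mod_cast hn) (card_biUnion_le.trans (by omega))⟩
  rw [hprob, div_le_div_iff₀ hN hZ, one_mul]
  calc Z ≤ _ := sum_pow_dKT_le_mul_sum_satisfiesBlock hφ0 hφ1 hsat
    _ ≤ _ := by rw [mul_comm]; gcongr

open scoped Classical in
/-- **Lemma 3.3 of Liu–Moitra.** For a Mallows model `M(φ, π*)` with `0 ≤ φ ≤ 1` and a
block structure `B = (S_1, …, S_j)` of pairwise disjoint subsets with total size `ℓ`,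
if `π*` satisfies `B` then the probability that a sample from `M(φ, π*)` satisfies `B`
is at least `1/n^{2ℓ}`. -/
theorem block_probability_lower_bound (n j : ℕ) (φ : ℝ) (hφ0 : 0 ≤ φ) (hφ1 : φ ≤ 1)
    (S : Fin j → Finset (Fin n))
    (hdisj : ∀ i₁ i₂ : Fin j, i₁ ≠ i₂ → Disjoint (S i₁) (S i₂))
    (πstar : Equiv.Perm (Fin n)) (hsat : satisfiesBlock πstar S) :
    (1 : ℝ) / (n : ℝ) ^ (2 * ∑ i, (S i).card) ≤
      ∑ σ : Equiv.Perm (Fin n),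
        if satisfiesBlock σ S then mallows φ πstar σ else 0 :=
  block_probability_lower_bound_general n j φ hφ0 hφ1 S πstar hsat
end

section
/- Let π* be a permutation of [n], let S ⊆ [n] with |S| = j, and let a be a position with a + j − 1 ≤ n. For permutations τ, τ′ of [n] that both place the elements of S in positions a, a+1, …, a+j−1 and that agree on the relative ordering of all elements of [n] \ S, one has d_KT(π*, τ) − d_KT(π*, τ′) = d_KT(π*|_S, τ|_S) − d_KT(π*|_S, τ′|_S). Consequently, for any φ > 0, the conditional distribution of a Mallows model M(φ, π*), conditioned on the event that the elements of S occupy positions a, …, a+j−1 and the relative ordering of [n] \ S equals a fixed ordering, induces on the relative ordering of S exactly the Mallows model M(φ, π*|_S). -/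
open Finset

/-- The restriction `π|_S` of a permutation of `Fin n` to a subset `S` of size `j`,
as a permutation of `Fin j`: it sends the index of an element of `S` (in the increasing
enumeration of `S`) to the rank of its position (under `π`) among the positions occupied
by the elements of `S`.  This records exactly the relative order in which `π` places the
elements of `S`. -/
noncomputable def restrictPerm {n : ℕ} (S : Finset (Fin n)) {j : ℕ} (h : S.card = j)
    (π : Equiv.Perm (Fin n)) : Equiv.Perm (Fin j) :=
  ((S.orderIsoOfFin h).toEquiv.trans
    ((π.subtypeEquiv (fun x => ⟨fun hx => Finset.mem_image_of_mem π hx,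
        fun hx => by
          obtain ⟨y, hy, hyx⟩ := Finset.mem_image.mp hx
          exact (π.injective hyx) ▸ hy⟩)).trans
      ((S.image π).orderIsoOfFin
        (by rw [Finset.card_image_of_injective S π.injective]; exact h)).toEquiv.symm))

/-- `τ` places the elements of `S` (and only those) in the consecutive positions
`a, a+1, …, a + |S| - 1` (positions numbered from `0`). -/
def placesAt {n : ℕ} (S : Finset (Fin n)) (a : ℕ) (τ : Equiv.Perm (Fin n)) : Prop :=
  S.image (fun x => ((τ x : ℕ))) = Finset.Ico a (a + S.card)

/-! Pairs of elements not both in `S` are ordered identically by `τ` and `τ'`: the block of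
positions of `S` is the same, and an element outside `S` sits at the position determined by its
rank among the elements outside `S` (`outsidePos`), a rank that `τ` and `τ'` share. Hence the
pairs on which `π*` disagrees with `τ` and with `τ'` differ only inside `S`, where they are
counted by the Kendall-Tau distance of the restrictions.

For the Mallows statement, the conditioning event is parametrized bijectively by the restriction
`s = τ|_S` (as `τ = placeWith … s`), and on it `φ ^ d_KT(π*, τ)` is proportional to
`φ ^ d_KT(π*|_S, s)` by the first part. -/

namespace Equiv.Perm

variable {n : ℕ}

theorem card_filter_apply_lt (τ : Perm (Fin n)) (y : Fin n) : #{z | τ z < τ y} = τ y := by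
  have : ({z | τ z < τ y} : Finset (Fin n)) = (Iio (τ y)).map τ.symm.toEmbedding := by
    ext z
    simp
  rw [this, card_map, Fin.card_Iio]

theorem ext_of_lt_iff {τ τ' : Perm (Fin n)} (h : ∀ x y, τ x < τ y ↔ τ' x < τ' y) : τ = τ' := by
  ext y
  rw [← card_filter_apply_lt, ← card_filter_apply_lt τ']
  simp_rw [h]

end Equiv.Perm

theorem sum_ite_eq_sum_sum_ite_and {ι κ M : Type*} [Fintype ι] [Fintype κ] [DecidableEq κ]
    [AddCommMonoid M] (p : ι → Prop) [DecidablePred p] (g : ι → κ) (f : ι → M) :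
    ∑ i, (if p i then f i else 0) = ∑ k, ∑ i, if p i ∧ g i = k then f i else 0 := by
  rw [sum_comm]
  simp only [ite_and, sum_ite_irrel, sum_ite_eq, mem_univ, if_true, sum_const_zero]

theorem eq_sum_mul_div_sum {ι K : Type*} [Fintype ι] [Field K] {u v : ι → K}
    (huv : ∀ i k, u i * v k = u k * v i) (hv : ∑ k, v k ≠ 0) (i : ι) :
    u i = (∑ k, u k) * (v i / ∑ k, v k) := by
  rw [mul_div_assoc', eq_div_iff hv, mul_sum, sum_mul]
  exact sum_congr rfl fun k _ => huv i k

namespace Mallows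

variable {n j a : ℕ}

def SameOrderOutside (S : Finset (Fin n)) (τ τ' : Equiv.Perm (Fin n)) : Prop :=
  ∀ x ∉ S, ∀ y ∉ S, (τ x < τ y ↔ τ' x < τ' y)

theorem SameOrderOutside.symm {S : Finset (Fin n)} {τ τ' : Equiv.Perm (Fin n)}
    (hord : SameOrderOutside S τ τ') : SameOrderOutside S τ' τ :=
  fun x hx y hy => (hord x hx y hy).symm

theorem SameOrderOutside.trans {S : Finset (Fin n)} {τ₁ τ₂ τ₃ : Equiv.Perm (Fin n)}
    (h₁₂ : SameOrderOutside S τ₁ τ₂) (h₂₃ : SameOrderOutside S τ₂ τ₃) :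
    SameOrderOutside S τ₁ τ₃ :=
  fun x hx y hy => (h₁₂ x hx y hy).trans (h₂₃ x hx y hy)

def offRank (S : Finset (Fin n)) (τ : Equiv.Perm (Fin n)) (y : Fin n) : ℕ :=
  #{z | z ∉ S ∧ τ z < τ y}

/-- The `r`-th position (counting from `0`) outside the block `[a, a + j)`. -/
def outsidePos (a j r : ℕ) : ℕ :=
  if r < a then r else r + j

theorem outsidePos_lt_outsidePos_iff {r r' : ℕ} :
    outsidePos a j r < outsidePos a j r' ↔ r < r' := by
  unfold outsidePos
  split_ifs <;> omega

section restrictPerm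

variable (S : Finset (Fin n)) (h : S.card = j)

theorem restrictPerm_lt_iff (π : Equiv.Perm (Fin n)) (i i' : Fin j) :
    restrictPerm S h π i < restrictPerm S h π i' ↔
      π (S.orderIsoOfFin h i) < π (S.orderIsoOfFin h i') := by
  have hπ : (S.image π).card = j := by rw [card_image_of_injective S π.injective, h]
  rw [← ((S.image π).orderIsoOfFin hπ).lt_iff_lt, ← Subtype.coe_lt_coe]
  simp [restrictPerm]

theorem lt_iff_lt_of_restrictPerm_eq {τ τ' : Equiv.Perm (Fin n)}
    (hres : restrictPerm S h τ = restrictPerm S h τ') {x y : Fin n} (hx : x ∈ S) (hy : y ∈ S) :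
    τ x < τ y ↔ τ' x < τ' y := by
  obtain ⟨i, rfl⟩ : ∃ i, (S.orderIsoOfFin h i : Fin n) = x :=
    ⟨(S.orderIsoOfFin h).symm ⟨x, hx⟩, by simp⟩
  obtain ⟨i', rfl⟩ : ∃ i', (S.orderIsoOfFin h i' : Fin n) = y :=
    ⟨(S.orderIsoOfFin h).symm ⟨y, hy⟩, by simp⟩
  rw [← restrictPerm_lt_iff, ← restrictPerm_lt_iff, hres]

open scoped Classical in
theorem card_filter_orderIsoOfFin_prod (P : Fin n → Fin n → Prop) :
    #{q : Fin j × Fin j | P (S.orderIsoOfFin h q.1) (S.orderIsoOfFin h q.2)} =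
      #{p : Fin n × Fin n | P p.1 p.2 ∧ p.1 ∈ S ∧ p.2 ∈ S} := by
  set e := S.orderIsoOfFin h
  refine card_bij (fun q _ => ((e q.1 : Fin n), (e q.2 : Fin n))) ?_ ?_ ?_
  · rintro ⟨q₁, q₂⟩ hq
    simp only [mem_filter, mem_univ, true_and] at hq ⊢
    exact ⟨hq, (e q₁).2, (e q₂).2⟩
  · rintro ⟨q₁, q₂⟩ - ⟨r₁, r₂⟩ - hqr
    simp only [Prod.mk.injEq, Subtype.coe_inj, e.injective.eq_iff] at hqr
    rw [hqr.1, hqr.2]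
  · rintro ⟨p₁, p₂⟩ hp
    simp only [mem_filter, mem_univ, true_and] at hp
    exact ⟨(e.symm ⟨p₁, hp.2.1⟩, e.symm ⟨p₂, hp.2.2⟩), by simpa using hp.1, by simp⟩

theorem dKT_restrictPerm (π τ : Equiv.Perm (Fin n)) :
    dKT (restrictPerm S h π) (restrictPerm S h τ) =
      #{p : Fin n × Fin n | (p.1 < p.2 ∧ ¬(π p.1 < π p.2 ↔ τ p.1 < τ p.2)) ∧
        p.1 ∈ S ∧ p.2 ∈ S} := by
  rw [dKT]
  convert card_filter_orderIsoOfFin_prod S h (fun x y => x < y ∧ ¬(π x < π y ↔ τ x < τ y))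
    using 3
  simp only [restrictPerm_lt_iff, Subtype.coe_lt_coe, OrderIso.lt_iff_lt]

end restrictPerm

theorem dKT_eq_card_add_card (S : Finset (Fin n)) (π τ : Equiv.Perm (Fin n)) :
    dKT π τ =
      #{p : Fin n × Fin n | (p.1 < p.2 ∧ ¬(π p.1 < π p.2 ↔ τ p.1 < τ p.2)) ∧
        p.1 ∈ S ∧ p.2 ∈ S} +
      #{p : Fin n × Fin n | (p.1 < p.2 ∧ ¬(π p.1 < π p.2 ↔ τ p.1 < τ p.2)) ∧
        ¬(p.1 ∈ S ∧ p.2 ∈ S)} := by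
  rw [dKT, ← card_filter_add_card_filter_not (fun p : Fin n × Fin n => p.1 ∈ S ∧ p.2 ∈ S),
    filter_filter, filter_filter]

section offRank

variable {S : Finset (Fin n)} {ρ : Equiv.Perm (Fin n)}

theorem offRank_lt_offRank_iff {x y : Fin n} (hx : x ∉ S) :
    offRank S ρ x < offRank S ρ y ↔ ρ x < ρ y := by
  constructor
  · intro hlt
    by_contra! hle
    refine (card_le_card ?_).not_gt hlt
    intro z
    simp only [mem_filter, mem_univ, true_and]
    exact fun hz => ⟨hz.1, hz.2.trans_le hle⟩
  · intro hlt
    refine card_lt_card ((ssubset_iff_of_subset ?_).mpr ⟨x, by simp [hx, hlt], by simp⟩)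
    intro z
    simp only [mem_filter, mem_univ, true_and]
    exact fun hz => ⟨hz.1, hz.2.trans hlt⟩

theorem eq_of_offRank_eq {x y : Fin n} (hx : x ∉ S) (hy : y ∉ S)
    (hxy : offRank S ρ x = offRank S ρ y) : x = y := by
  rcases lt_trichotomy (ρ x) (ρ y) with hlt | heq | hgt
  · exact absurd hxy ((offRank_lt_offRank_iff hx).mpr hlt).ne
  · exact ρ.injective heq
  · exact absurd hxy ((offRank_lt_offRank_iff hy).mpr hgt).ne'

theorem offRank_lt (h : S.card = j) {y : Fin n} (hy : y ∉ S) : offRank S ρ y < n - j := by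
  have hsub : ({z | z ∉ S ∧ ρ z < ρ y} : Finset (Fin n)) ⊆ Sᶜ.erase y := by
    intro z
    simp only [mem_filter, mem_univ, true_and, mem_erase, mem_compl]
    exact fun hz => ⟨ne_of_apply_ne ρ hz.2.ne, hz.1⟩
  have hle := card_le_card hsub
  have hpos : 0 < #Sᶜ := card_pos.mpr ⟨y, mem_compl.mpr hy⟩
  rw [card_erase_of_mem (mem_compl.mpr hy)] at hle
  rw [card_compl, Fintype.card_fin, h] at hle hpos
  unfold offRank
  omega

theorem offRank_eq_of_sameOrderOutside {τ : Equiv.Perm (Fin n)}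
    (hord : SameOrderOutside S τ ρ) {y : Fin n} (hy : y ∉ S) :
    offRank S τ y = offRank S ρ y := by
  unfold offRank
  congr 1
  ext z
  simp only [mem_filter, mem_univ, true_and, and_congr_right_iff]
  exact fun hz => hord z hz y hy

end offRank

section placesAt

variable {S : Finset (Fin n)} {τ τ' : Equiv.Perm (Fin n)}

theorem mem_iff_of_placesAt (hτ : placesAt S a τ) {x : Fin n} :
    x ∈ S ↔ a ≤ (τ x : ℕ) ∧ (τ x : ℕ) < a + S.card := by
  rw [← mem_Ico, ← hτ, mem_image]
  refine ⟨fun hx => ⟨x, hx, rfl⟩, ?_⟩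
  rintro ⟨y, hy, hyx⟩
  rwa [← τ.injective (Fin.ext hyx)]

theorem val_apply_eq_outsidePos (hτ : placesAt S a τ) {y : Fin n} (hy : y ∉ S) :
    (τ y : ℕ) = outsidePos a S.card (offRank S τ y) := by
  have hsplit : (τ y : ℕ) = #{z ∈ S | τ z < τ y} + offRank S τ y := by
    rw [← τ.card_filter_apply_lt, offRank,
      ← card_filter_add_card_filter_not (s := {z | τ z < τ y}) (· ∈ S)]
    simp only [filter_filter, and_comm]
    congr 2
    ext z
    simp
  have hSpos : ∀ z ∈ S, a ≤ (τ z : ℕ) ∧ (τ z : ℕ) < a + S.card :=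
    fun z hz => (mem_iff_of_placesAt hτ).mp hz
  rcases Nat.lt_or_ge (τ y) a with hbefore | hge
  · have hnone : #{z ∈ S | τ z < τ y} = 0 := by
      rw [card_eq_zero, filter_eq_empty_iff]
      intro z hz
      have := hSpos z hz
      rw [Fin.lt_def]
      omega
    rw [outsidePos, if_pos (by omega)]
    omega
  · have hafter : a + S.card ≤ τ y := by
      by_contra
      exact hy ((mem_iff_of_placesAt hτ).mpr ⟨hge, by omega⟩)
    have hall : #{z ∈ S | τ z < τ y} = S.card := by
      rw [filter_true_of_mem]
      intro z hz
      have := hSpos z hz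
      rw [Fin.lt_def]
      omega
    rw [outsidePos, if_neg (by omega)]
    omega

theorem apply_eq_of_notMem (hτ : placesAt S a τ) (hτ' : placesAt S a τ')
    (hord : SameOrderOutside S τ τ') {y : Fin n} (hy : y ∉ S) : τ y = τ' y :=
  Fin.ext (by rw [val_apply_eq_outsidePos hτ hy, val_apply_eq_outsidePos hτ' hy,
    offRank_eq_of_sameOrderOutside hord hy])

theorem lt_iff_lt_of_placesAt (hτ : placesAt S a τ) (hτ' : placesAt S a τ')
    (hord : SameOrderOutside S τ τ') {x y : Fin n} (hxy : ¬(x ∈ S ∧ y ∈ S)) :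
    τ x < τ y ↔ τ' x < τ' y := by
  by_cases hx : x ∈ S <;> by_cases hy : y ∈ S
  · exact absurd ⟨hx, hy⟩ hxy
  · have := (mem_iff_of_placesAt hτ).mp hx
    have := (mem_iff_of_placesAt hτ').mp hx
    have := (mem_iff_of_placesAt hτ').not.mp hy
    rw [apply_eq_of_notMem hτ hτ' hord hy, Fin.lt_def, Fin.lt_def]
    omega
  · have := (mem_iff_of_placesAt hτ).mp hy
    have := (mem_iff_of_placesAt hτ').mp hy
    have := (mem_iff_of_placesAt hτ').not.mp hx
    rw [apply_eq_of_notMem hτ hτ' hord hx, Fin.lt_def, Fin.lt_def]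
    omega
  · exact hord x hx y hy

theorem dKT_sub_dKT_eq (h : S.card = j) (π : Equiv.Perm (Fin n))
    (hτ : placesAt S a τ) (hτ' : placesAt S a τ') (hord : SameOrderOutside S τ τ') :
    (dKT π τ : ℤ) - dKT π τ' =
      (dKT (restrictPerm S h π) (restrictPerm S h τ) : ℤ) -
        dKT (restrictPerm S h π) (restrictPerm S h τ') := by
  have houtside : #{p : Fin n × Fin n | (p.1 < p.2 ∧ ¬(π p.1 < π p.2 ↔ τ p.1 < τ p.2)) ∧
        ¬(p.1 ∈ S ∧ p.2 ∈ S)} =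
      #{p : Fin n × Fin n | (p.1 < p.2 ∧ ¬(π p.1 < π p.2 ↔ τ' p.1 < τ' p.2)) ∧
        ¬(p.1 ∈ S ∧ p.2 ∈ S)} := by
    congr 1
    ext p
    simp only [mem_filter, mem_univ, true_and]
    have := fun hp => lt_iff_lt_of_placesAt hτ hτ' hord (x := p.1) (y := p.2) hp
    exact ⟨fun hp => by rwa [← this hp.2], fun hp => by rwa [this hp.2]⟩
  rw [dKT_eq_card_add_card S π τ, dKT_eq_card_add_card S π τ', dKT_restrictPerm,
    dKT_restrictPerm]
  push_cast [houtside]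
  ring

end placesAt

section placeWith

variable (S : Finset (Fin n)) (h : S.card = j) (ρ : Equiv.Perm (Fin n)) (s : Equiv.Perm (Fin j))

noncomputable def placePos (a : ℕ) (x : Fin n) : ℕ :=
  if hx : x ∈ S then a + s ((S.orderIsoOfFin h).symm ⟨x, hx⟩)
  else outsidePos a j (offRank S ρ x)

theorem placePos_lt (ha : a + j ≤ n) (x : Fin n) : placePos S h ρ s a x < n := by
  unfold placePos outsidePos
  split_ifs with hx
  · have := (s ((S.orderIsoOfFin h).symm ⟨x, hx⟩)).isLt
    omega
  · omega
  · have := offRank_lt (ρ := ρ) h hx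
    omega

theorem placePos_injective : Function.Injective (placePos S h ρ s a) := by
  intro x y hxy
  unfold placePos at hxy
  by_cases hx : x ∈ S <;> by_cases hy : y ∈ S
  · simp only [hx, hy, dite_true, Nat.add_left_cancel_iff, Fin.val_inj] at hxy
    simpa using s.injective hxy
  · simp only [hx, hy, dite_true, dite_false, outsidePos] at hxy
    split_ifs at hxy <;> omega
  · simp only [hx, hy, dite_true, dite_false, outsidePos] at hxy
    split_ifs at hxy <;> omega
  · simp only [hx, hy, dite_false] at hxy
    exact eq_of_offRank_eq hx hy
      (by unfold outsidePos at hxy; split_ifs at hxy <;> omega)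

noncomputable def placeWith (ha : a + j ≤ n) : Equiv.Perm (Fin n) :=
  Equiv.ofBijective (fun x => ⟨placePos S h ρ s a x, placePos_lt S h ρ s ha x⟩)
    (Finite.injective_iff_bijective.mp fun _ _ hxy =>
      placePos_injective S h ρ s (Fin.val_eq_of_eq hxy))

variable (ha : a + j ≤ n)

theorem val_placeWith (x : Fin n) : (placeWith S h ρ s ha x : ℕ) = placePos S h ρ s a x := rfl

theorem placesAt_placeWith : placesAt S a (placeWith S h ρ s ha) := by
  refine eq_of_subset_of_card_le ?_ ?_
  · intro m
    simp only [mem_image, mem_Ico, val_placeWith]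
    rintro ⟨x, hx, rfl⟩
    simp only [placePos, hx, dite_true]
    omega
  · rw [card_image_of_injective (f := fun x => (placeWith S h ρ s ha x : ℕ)) S
      (Fin.val_injective.comp (placeWith S h ρ s ha).injective)]
    simp

theorem restrictPerm_placeWith : restrictPerm S h (placeWith S h ρ s ha) = s := by
  refine Equiv.Perm.ext_of_lt_iff fun i i' => ?_
  rw [restrictPerm_lt_iff, Fin.lt_def, val_placeWith, val_placeWith]
  simp only [placePos, (S.orderIsoOfFin h _).2, dite_true, Subtype.coe_eta,
    OrderIso.symm_apply_apply, Fin.lt_def]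
  omega

theorem sameOrderOutside_placeWith : SameOrderOutside S (placeWith S h ρ s ha) ρ := by
  intro x hx y hy
  simp only [Fin.lt_def, val_placeWith, placePos, hx, hy, dite_false]
  rw [outsidePos_lt_outsidePos_iff, offRank_lt_offRank_iff hx, Fin.lt_def]

theorem eq_placeWith_iff {τ : Equiv.Perm (Fin n)} :
    τ = placeWith S h ρ s ha ↔
      placesAt S a τ ∧ SameOrderOutside S τ ρ ∧ restrictPerm S h τ = s := by
  constructor
  · rintro rfl
    exact ⟨placesAt_placeWith S h ρ s ha, sameOrderOutside_placeWith S h ρ s ha,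
      restrictPerm_placeWith S h ρ s ha⟩
  · rintro ⟨hτ, hord, rfl⟩
    refine Equiv.Perm.ext_of_lt_iff fun x y => ?_
    by_cases hxy : x ∈ S ∧ y ∈ S
    · exact lt_iff_lt_of_restrictPerm_eq S h (restrictPerm_placeWith ..).symm hxy.1 hxy.2
    · exact lt_iff_lt_of_placesAt hτ (placesAt_placeWith ..)
        (hord.trans (sameOrderOutside_placeWith S h ρ _ ha).symm) hxy

end placeWith

theorem mallows_placeWith {S : Finset (Fin n)} (h : S.card = j) (ha : a + j ≤ n)
    (π ρ : Equiv.Perm (Fin n)) {φ : ℝ} (hφ : 0 < φ) (s : Equiv.Perm (Fin j)) :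
    mallows φ π (placeWith S h ρ s ha) =
      (∑ s', mallows φ π (placeWith S h ρ s' ha)) * mallows φ (restrictPerm S h π) s := by
  refine eq_sum_mul_div_sum (u := fun s => mallows φ π (placeWith S h ρ s ha))
    (v := fun s => φ ^ dKT (restrictPerm S h π) s) (fun s s' => ?_)
    (sum_pos (fun _ _ => pow_pos hφ _) univ_nonempty).ne' s
  have hdiff := dKT_sub_dKT_eq h π (placesAt_placeWith S h ρ s ha)
    (placesAt_placeWith S h ρ s' ha)
    ((sameOrderOutside_placeWith S h ρ s ha).trans (sameOrderOutside_placeWith S h ρ s' ha).symm)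
  rw [restrictPerm_placeWith, restrictPerm_placeWith] at hdiff
  simp only [mallows, div_mul_eq_mul_div, ← pow_add]
  congr 2
  omega

end Mallows

open scoped Classical in
/-- **Fact 3.1 of Liu–Moitra.** Let `S ⊆ [n]` with `|S| = j` and let `a` be a position
with `a + j - 1 ≤ n`.  (1) For permutations `τ, τ'` that both place the elements of `S`
in positions `a, …, a+j-1` and agree on the relative ordering of `[n] \ S`,
`d_KT(π*, τ) - d_KT(π*, τ') = d_KT(π*|_S, τ|_S) - d_KT(π*|_S, τ'|_S)`.
(2) Consequently, for `φ > 0`, the conditional distribution of `M(φ, π*)`, conditioned on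
the elements of `S` occupying positions `a, …, a+j-1` and the relative ordering of
`[n] \ S` being that of a fixed permutation `ρ`, induces on the relative ordering of `S`
exactly the Mallows model `M(φ, π*|_S)`. -/
theorem conditional_restriction (n j a : ℕ) (S : Finset (Fin n)) (h : S.card = j)
    (ha : a + j ≤ n) (πstar : Equiv.Perm (Fin n)) :
    (∀ τ τ' : Equiv.Perm (Fin n), placesAt S a τ → placesAt S a τ' →
      (∀ x ∉ S, ∀ y ∉ S, (τ x < τ y ↔ τ' x < τ' y)) →
      (dKT πstar τ : ℤ) - (dKT πstar τ' : ℤ) =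
        (dKT (restrictPerm S h πstar) (restrictPerm S h τ) : ℤ) -
          (dKT (restrictPerm S h πstar) (restrictPerm S h τ') : ℤ)) ∧
    (∀ φ : ℝ, 0 < φ → ∀ ρ : Equiv.Perm (Fin n), ∀ s : Equiv.Perm (Fin j),
      (∑ τ : Equiv.Perm (Fin n),
        if placesAt S a τ ∧ (∀ x ∉ S, ∀ y ∉ S, (τ x < τ y ↔ ρ x < ρ y)) ∧
            restrictPerm S h τ = s
        then mallows φ πstar τ else 0)
      = (∑ τ : Equiv.Perm (Fin n),
          if placesAt S a τ ∧ (∀ x ∉ S, ∀ y ∉ S, (τ x < τ y ↔ ρ x < ρ y))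
          then mallows φ πstar τ else 0)
        * mallows φ (restrictPerm S h πstar) s) := by
  refine ⟨fun τ τ' hτ hτ' hord => Mallows.dKT_sub_dKT_eq h πstar hτ hτ' hord,
    fun φ hφ ρ s => ?_⟩
  have hiff : ∀ τ s', (placesAt S a τ ∧ (∀ x ∉ S, ∀ y ∉ S, (τ x < τ y ↔ ρ x < ρ y)) ∧
      restrictPerm S h τ = s') ↔ τ = Mallows.placeWith S h ρ s' ha :=
    fun τ s' => (Mallows.eq_placeWith_iff S h ρ s' ha).symm
  conv_rhs => rw [sum_ite_eq_sum_sum_ite_and _ (restrictPerm S h)]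
  simp only [and_assoc, hiff, sum_ite_eq', mem_univ, if_true]
  exact Mallows.mallows_placeWith h ha πstar ρ hφ s
end

section
/- Let k ≥ 1, let 0 < μ ≤ 1/(40k²), let n ≥ 40k², and set λ = 2μ/n. Then for every integer i with 1 ≤ i ≤ 2k, the probability that the Mallows model M(iλ, π) generates its own center permutation π satisfies 1 − 2iμ ≤ Pr_{M(iλ, π)}[π] ≤ 1 − (2i−1)μ. -/
open Finset

/-!
Right-invariance of the Kendall-Tau distance gives `Pr[π] = 1 / Z` with
`Z = ∑ τ, φ ^ inv τ`, where `φ = 2iμ/n`, so `nφ = 2iμ`.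

The Lehmer code `j ↦ #{i > j | τ i < τ j}` is an injection of permutations into
`Fin n → Fin n` whose entries sum to `inv τ`; hence `Z ≤ (∑ v < n, φ ^ v) ^ n ≤ (1 - φ)⁻¹ ^ n`
and Bernoulli's inequality gives `1 / Z ≥ (1 - φ) ^ n ≥ 1 - nφ`.

The identity and the `n - 1` adjacent transpositions give `Z ≥ 1 + (n - 1)φ = 1 + 2iμ - φ`, and
`1 / (1 + 2iμ - φ) ≤ 1 - (2i - 1)μ` because `φ ≤ μ / 10` and `4i²μ ≤ 2/5`.
-/

theorem dKT_mul_right {n : ℕ} (π τ : Equiv.Perm (Fin n)) : dKT π (τ * π) = numInv τ := by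
  unfold dKT numInv
  refine card_nbij'
    (fun p => if π p.1 < π p.2 then (π p.1, π p.2) else (π p.2, π p.1))
    (fun q => if π.symm q.1 < π.symm q.2 then (π.symm q.1, π.symm q.2)
      else (π.symm q.2, π.symm q.1)) ?_ ?_ ?_ ?_
  all_goals
    rintro ⟨a, b⟩
    simp only [coe_filter, mem_univ, true_and, Set.mem_ofPred_eq, Equiv.Perm.mul_apply]
    split_ifs <;> grind [Equiv.apply_eq_iff_eq, Equiv.apply_symm_apply, Equiv.symm_apply_apply]

theorem numInv_one {n : ℕ} : numInv (1 : Equiv.Perm (Fin n)) = 0 := by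
  rw [numInv, card_eq_zero, filter_eq_empty_iff]
  exact fun p _ h => lt_asymm h.1 h.2

theorem mallows_self_eq_inv_sum {n : ℕ} (φ : ℝ) (π : Equiv.Perm (Fin n)) :
    mallows φ π π = (∑ τ : Equiv.Perm (Fin n), φ ^ numInv τ)⁻¹ := by
  have hself : dKT π π = 0 := by simpa [numInv_one] using dKT_mul_right π 1
  rw [mallows, hself, pow_zero, one_div, ← Equiv.sum_comp (Equiv.mulRight π)]
  simp only [Equiv.coe_mulRight, dKT_mul_right]

def lehmerCode {n : ℕ} (τ : Equiv.Perm (Fin n)) (j : Fin n) : ℕ :=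
  #{i | j < i ∧ τ i < τ j}

theorem card_filter_apply_lt {n : ℕ} (τ : Equiv.Perm (Fin n)) (v : Fin n) :
    #{i | τ i < v} = v := by
  rw [← Fin.card_Iio, ← filter_gt_eq_Iio, ← card_map τ.toEmbedding, map_filter]
  simp

theorem sum_lehmerCode {n : ℕ} (τ : Equiv.Perm (Fin n)) : ∑ j, lehmerCode τ j = numInv τ := by
  rw [numInv, card_filter, Fintype.sum_prod_type]
  simp only [lehmerCode, card_filter]

theorem lehmerCode_lt {n : ℕ} (τ : Equiv.Perm (Fin n)) (j : Fin n) : lehmerCode τ j < n :=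
  (card_lt_univ_of_notMem (x := j) (by simp)).trans_eq (Fintype.card_fin n)

theorem val_apply_eq_lehmerCode_add {n : ℕ} (τ : Equiv.Perm (Fin n)) (j : Fin n) :
    (τ j : ℕ) = lehmerCode τ j + #{i | i < j ∧ τ i < τ j} := by
  rw [← card_filter_apply_lt τ, lehmerCode, ← card_union_of_disjoint]
  · congr 1; ext i; simp only [mem_filter, mem_univ, true_and, mem_union]
    grind
  · exact disjoint_filter.2 fun i _ h h' => lt_asymm h.1 h'.1

-- `σ j = lehmerCode σ j + #{i < j | σ i < σ j}`; passing from `σ j` to a larger `σ' j` with the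
-- same prefix can add to the second term only values strictly between them.
theorem not_lt_of_lehmerCode_eq {n : ℕ} {σ σ' : Equiv.Perm (Fin n)} {j : Fin n}
    (hcode : lehmerCode σ j = lehmerCode σ' j) (hagree : ∀ i < j, σ i = σ' i) :
    ¬σ j < σ' j := by
  intro hlt
  have hsub : ({i | i < j ∧ σ' i < σ' j} : Finset (Fin n)) ⊆
      ({i | i < j ∧ σ i < σ j} : Finset (Fin n)) ∪
        (Ioo (σ j) (σ' j)).map σ.symm.toEmbedding := by
    intro i
    simp only [mem_filter, mem_univ, true_and, mem_union,
      mem_map_equiv, Equiv.symm_symm, mem_Ioo]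
    rintro ⟨hij, hi⟩
    have : σ i ≠ σ j := σ.injective.ne hij.ne
    grind
  have hcard := (card_le_card hsub).trans (card_union_le _ _)
  rw [card_map, Fin.card_Ioo] at hcard
  have := val_apply_eq_lehmerCode_add σ j
  have := val_apply_eq_lehmerCode_add σ' j
  have : (σ j : ℕ) < σ' j := hlt
  omega

theorem lehmerCode_injective {n : ℕ} : Function.Injective (lehmerCode (n := n)) := by
  intro τ τ' h
  ext j : 1
  induction j using WellFoundedLT.induction with
  | _ j ih =>
    exact le_antisymm
      (not_lt.1 (not_lt_of_lehmerCode_eq (congrFun h j).symm fun i hi => (ih i hi).symm))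
      (not_lt.1 (not_lt_of_lehmerCode_eq (congrFun h j) ih))

theorem sum_pow_numInv_le {n : ℕ} {φ : ℝ} (hφ0 : 0 ≤ φ) (hφ1 : φ < 1) :
    ∑ τ : Equiv.Perm (Fin n), φ ^ numInv τ ≤ (1 - φ)⁻¹ ^ n := by
  let code (τ : Equiv.Perm (Fin n)) (j : Fin n) : Fin n := ⟨lehmerCode τ j, lehmerCode_lt τ j⟩
  have hcode : Function.Injective code := fun τ τ' h =>
    lehmerCode_injective (funext fun j => congrArg Fin.val (congrFun h j))
  have hgeom : ∑ v : Fin n, φ ^ (v : ℕ) ≤ (1 - φ)⁻¹ := by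
    simpa [Fin.sum_univ_eq_sum_range, ← range_eq_Ico] using
      geom_sum_Ico_le_of_lt_one (m := 0) (n := n) hφ0 hφ1
  calc ∑ τ, φ ^ numInv τ = ∑ τ, ∏ j, φ ^ (code τ j : ℕ) := by
        simp only [code, ← sum_lehmerCode, prod_pow_eq_pow_sum]
    _ = ∑ f ∈ univ.image code, ∏ j, φ ^ (f j : ℕ) := by
        rw [sum_image hcode.injOn]
    _ ≤ ∑ f : Fin n → Fin n, ∏ j, φ ^ (f j : ℕ) :=
        sum_le_univ_sum_of_nonneg fun f => by positivity
    _ = (∑ v : Fin n, φ ^ (v : ℕ)) ^ n := (Fintype.sum_pow (fun v : Fin n => φ ^ (v : ℕ)) n).symm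
    _ ≤ (1 - φ)⁻¹ ^ n := pow_le_pow_left₀ (by positivity) hgeom n

theorem numInv_swap_castSucc_succ {m : ℕ} (a : Fin m) :
    numInv (Equiv.swap a.castSucc a.succ) = 1 := by
  rw [numInv, card_eq_one]
  refine ⟨(a.castSucc, a.succ), ?_⟩
  ext ⟨p, q⟩
  rw [mem_filter, mem_singleton]
  simp only [mem_univ, true_and, Prod.mk.injEq, Equiv.swap_apply_def]
  split_ifs <;> simp only [Fin.ext_iff, Fin.lt_def, Fin.val_castSucc, Fin.val_succ] at * <;> omega

theorem swap_castSucc_succ_injective {m : ℕ} :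
    Function.Injective fun a : Fin m => Equiv.swap a.castSucc a.succ := by
  intro a b h
  have := Equiv.congr_fun h a.castSucc
  simp only [Equiv.swap_apply_def] at this
  split_ifs at this <;> simp only [Fin.ext_iff, Fin.val_castSucc, Fin.val_succ] at * <;> omega

theorem one_add_mul_le_sum_pow_numInv {m : ℕ} {φ : ℝ} (hφ : 0 ≤ φ) :
    1 + m * φ ≤ ∑ τ : Equiv.Perm (Fin (m + 1)), φ ^ numInv τ := by
  have hone : (1 : Equiv.Perm (Fin (m + 1))) ∉
      univ.image fun a : Fin m => Equiv.swap a.castSucc a.succ := by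
    simp only [mem_image, mem_univ, true_and, not_exists]
    intro a h
    simpa [h, numInv_one] using numInv_swap_castSucc_succ a
  calc 1 + m * φ
      = ∑ τ ∈ insert 1 (univ.image fun a : Fin m => Equiv.swap a.castSucc a.succ),
          φ ^ numInv τ := by
        rw [sum_insert hone, sum_image swap_castSucc_succ_injective.injOn]
        simp [numInv_one, numInv_swap_castSucc_succ]
    _ ≤ ∑ τ, φ ^ numInv τ := sum_le_univ_sum_of_nonneg fun τ => by positivity

theorem one_sub_mul_le_mallows_self {n : ℕ} {φ : ℝ} (hφ0 : 0 ≤ φ) (hφ1 : φ < 1)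
    (π : Equiv.Perm (Fin n)) : 1 - n * φ ≤ mallows φ π π := by
  have hZ : 1 ≤ ∑ τ : Equiv.Perm (Fin n), φ ^ numInv τ := by
    simpa [numInv_one] using single_le_sum (f := fun τ => φ ^ numInv τ)
      (fun τ _ => by positivity) (mem_univ 1)
  calc 1 - n * φ ≤ (1 - φ) ^ n := by
        simpa [sub_eq_add_neg] using one_add_mul_le_pow (a := -φ) (by linarith) n
    _ = ((1 - φ)⁻¹ ^ n)⁻¹ := by rw [inv_pow, inv_inv]
    _ ≤ (∑ τ : Equiv.Perm (Fin n), φ ^ numInv τ)⁻¹ :=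
        inv_anti₀ (by linarith) (sum_pow_numInv_le hφ0 hφ1)
    _ = mallows φ π π := (mallows_self_eq_inv_sum φ π).symm

theorem mallows_self_le_inv_one_add {m : ℕ} {φ : ℝ} (hφ : 0 ≤ φ) (π : Equiv.Perm (Fin (m + 1))) :
    mallows φ π π ≤ (1 + m * φ)⁻¹ := by
  rw [mallows_self_eq_inv_sum]
  exact inv_anti₀ (by positivity) (one_add_mul_le_sum_pow_numInv hφ)

/-- **Claim inside Lemma 6.1 of Liu–Moitra.** Let `k ≥ 1`, `0 < μ ≤ 1/(40k²)`,
`n ≥ 40k²` and set `λ = 2μ/n`. Then for every `1 ≤ i ≤ 2k`, the probability that the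
Mallows model `M(iλ, π)` generates its own center satisfies
`1 - 2iμ ≤ Pr_{M(iλ, π)}[π] ≤ 1 - (2i-1)μ`. -/
theorem center_probability_bounds (n k : ℕ) (hk : 1 ≤ k) (μ : ℝ) (hμ0 : 0 < μ)
    (hμ : μ ≤ 1 / (40 * (k : ℝ) ^ 2)) (hn : 40 * k ^ 2 ≤ n)
    (π : Equiv.Perm (Fin n)) (i : ℕ) (hi1 : 1 ≤ i) (hi2 : i ≤ 2 * k) :
    1 - 2 * (i : ℝ) * μ ≤ mallows ((i : ℝ) * (2 * μ / n)) π π ∧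
      mallows ((i : ℝ) * (2 * μ / n)) π π ≤ 1 - (2 * (i : ℝ) - 1) * μ := by
  obtain ⟨m, rfl⟩ : ∃ m, n = m + 1 := Nat.exists_eq_add_one.2 (by nlinarith)
  have hK : (1 : ℝ) ≤ k := by exact_mod_cast hk
  have hI1 : (1 : ℝ) ≤ i := by exact_mod_cast hi1
  have hI2 : (i : ℝ) ≤ 2 * k := by exact_mod_cast hi2
  have hN : 40 * (k : ℝ) ^ 2 ≤ m + 1 := by exact_mod_cast hn
  have hkμ : 40 * (k : ℝ) ^ 2 * μ ≤ 1 := by rwa [le_div_iff₀' (by positivity)] at hμ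
  set φ := (i : ℝ) * (2 * μ / ↑(m + 1))
  have hφ0 : 0 ≤ φ := by positivity
  have hnφ : (m + 1) * φ = 2 * i * μ := by simp only [φ]; push_cast; field_simp
  have hkk : (k : ℝ) ≤ k ^ 2 := by nlinarith
  have hiμ : 2 * i * μ ≤ 1 / 10 := by nlinarith [mul_le_mul_of_nonneg_right hI2 hμ0.le]
  have hφμ : 10 * φ ≤ μ := by
    have h20i : 20 * (i : ℝ) ≤ m + 1 := by nlinarith
    nlinarith [mul_le_mul_of_nonneg_right h20i hφ0]
  constructor
  · have := one_sub_mul_le_mallows_self hφ0 (by nlinarith) π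
    push_cast at this
    linarith
  · refine (mallows_self_le_inv_one_add hφ0 π).trans ?_
    have hmφ : (m : ℝ) * φ = 2 * i * μ - φ := by linarith
    have hi2μ : 4 * (i : ℝ) ^ 2 * μ ≤ 2 / 5 := by nlinarith
    rw [inv_le_iff_one_le_mul₀ (by positivity), hmφ]
    nlinarith [mul_nonneg (mul_nonneg (by linarith : (0 : ℝ) ≤ 2 * i - 1) hμ0.le) hφ0,
      mul_le_mul_of_nonneg_right hi2μ hμ0.le,
      mul_nonneg (mul_nonneg (Nat.cast_nonneg i) hμ0.le) hμ0.le]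
end

section
/- Let 0 ≤ φ ≤ 1 and let π_1, π_2 be permutations of [n] such that π_2 is obtained from π_1 by reversing m pairwise disjoint pairs of elements, each pair occupying two consecutive positions in π_1 (so each pair is also consecutive in π_2). Then d_TV(M(φ, π_1), M(φ, π_2)) ≥ (1/2) · (Σ_{i=0}^{m} C(m, i) |φ^i − φ^{m−i}|) / (1+φ)^m. Moreover, for each i, the probability under M(φ, π_1) that a sampled permutation ranks exactly i of these m pairs in reversed relative order is C(m, i) φ^i / (1+φ)^m. -/
open Finset

/-!
Right-multiplying `σ` by the transposition of a pair `(x j, y j)` toggles whether `σ` reverses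
that pair and fixes the relative order of every other pair. Because the pair is adjacent in `π₁`,
it also changes `d_KT(π₁, σ)` by exactly one. Hence the Mallows weight of
`{σ | σ reverses exactly the pairs in S}` is `φ ^ #S` times that of `S = ∅`, so the number of
reversed pairs is binomial with parameters `m` and `φ / (1 + φ)` under `M(φ, π₁)`. Under
`M(φ, π₂)`, whose pairs point the other way, the count is mirrored (`i ↦ m - i`). The total
variation distance is at least the distance between these two pushforward distributions.
-/
open Equiv

section

theorem swap_lt_swap_iff_of_covBy {α : Type*} [LinearOrder α] {k l i j : α} (hkl : k ⋖ l)
    (h : (i, j) ≠ (k, l)) (h' : (i, j) ≠ (l, k)) : swap k l i < swap k l j ↔ i < j := by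
  have hk : ∀ c, k < c ↔ l ≤ c := fun c => hkl.lt_iff_le_right
  have hl : ∀ c, c < l ↔ c ≤ k := fun c => hkl.lt_iff_le_left
  rw [swap_apply_def, swap_apply_def]
  split_ifs <;> grind

theorem Finset.card_eq_two_mul_card_filter_of_swap {α : Type*} {s : Finset (α × α)}
    (p : α × α → Prop) [DecidablePred p] (hs : ∀ q ∈ s, q.swap ∈ s)
    (hp : ∀ q ∈ s, p q.swap ↔ ¬p q) : #s = 2 * #(s.filter p) := by
  rw [← card_filter_add_card_filter_not p, two_mul, add_right_inj]
  refine card_nbij' Prod.swap Prod.swap ?_ ?_ (fun _ _ => rfl) (fun _ _ => rfl)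
  · intro q hq
    simp only [coe_filter, Set.mem_ofPred_eq] at hq ⊢
    exact ⟨hs q hq.1, (hp q hq.1).2 hq.2⟩
  · intro q hq
    simp only [coe_filter, Set.mem_ofPred_eq] at hq ⊢
    exact ⟨hs q hq.1, by simpa [hp q hq.1] using hq.2⟩

theorem Fin.covBy_of_val_eq_add_one {n : ℕ} {a b : Fin n} (h : (b : ℕ) = a + 1) : a ⋖ b :=
  ⟨by rw [Fin.lt_def]; omega, fun c hac hcb => by rw [Fin.lt_def] at hac hcb; omega⟩

theorem Finset.sum_abs_sum_ite_sub_sum_ite_le {α β : Type*} [Fintype α] [DecidableEq β]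
    (P Q : α → ℝ) (g : α → β) {t : Finset β} (hg : ∀ a, g a ∈ t) :
    ∑ b ∈ t, |(∑ a, if g a = b then P a else 0) - ∑ a, if g a = b then Q a else 0|
      ≤ ∑ a, |P a - Q a| := by
  rw [← sum_fiberwise_of_maps_to fun a _ => hg a]
  refine sum_le_sum fun b _ => ?_
  rw [← sum_filter, ← sum_filter, ← sum_sub_distrib]
  exact abs_sum_le_sum_abs _ _

variable {n : ℕ}

def discordantPairs (π σ : Perm (Fin n)) : Finset (Fin n × Fin n) :=
  {q | π q.1 < π q.2 ∧ σ q.2 < σ q.1}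

@[simp]
theorem mem_discordantPairs {π σ : Perm (Fin n)} {q : Fin n × Fin n} :
    q ∈ discordantPairs π σ ↔ π q.1 < π q.2 ∧ σ q.2 < σ q.1 := by
  simp [discordantPairs]

-- Both sides are halves of the set of discordant ordered pairs, cut once by the order of the
-- indices and once by the order under `π`.
theorem dKT_eq_card_discordantPairs (π σ : Perm (Fin n)) :
    dKT π σ = #(discordantPairs π σ) := by
  set D : Finset (Fin n × Fin n) := {q | ¬((π q.1 < π q.2) ↔ (σ q.1 < σ q.2))}
  have hD : ∀ q ∈ D, q.1 ≠ q.2 := by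
    intro q hq heq
    simp [D, heq] at hq
  have hswap : ∀ q ∈ D, q.swap ∈ D := by
    intro q hq
    have h1 : π q.1 ≠ π q.2 := π.injective.ne (hD q hq)
    have h2 : σ q.1 ≠ σ q.2 := σ.injective.ne (hD q hq)
    simp only [D, mem_filter, mem_univ, true_and, Prod.fst_swap, Prod.snd_swap] at hq ⊢
    grind
  have hpos := card_eq_two_mul_card_filter_of_swap (fun q => q.1 < q.2) hswap fun q hq => by
    grind [hD q hq]
  have hπ := card_eq_two_mul_card_filter_of_swap (fun q => π q.1 < π q.2) hswap fun q hq => by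
    have := π.injective.ne (hD q hq)
    grind
  have h1 : D.filter (fun q => q.1 < q.2) =
      univ.filter fun q : Fin n × Fin n => q.1 < q.2 ∧ ¬((π q.1 < π q.2) ↔ (σ q.1 < σ q.2)) := by
    rw [filter_filter]; exact filter_congr fun _ _ => and_comm
  have h2 : D.filter (fun q => π q.1 < π q.2) = discordantPairs π σ := by
    rw [filter_filter]; refine filter_congr fun q _ => ?_
    grind
  rw [h1] at hpos; rw [h2] at hπ
  unfold dKT; omega

theorem dKT_eq_dKT_mul_swap_add_one {π σ : Perm (Fin n)} {a b : Fin n} (hab : π a ⋖ π b)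
    (hσ : σ b < σ a) : dKT π σ = dKT π (σ * swap a b) + 1 := by
  set τ := swap a b
  have hne : a ≠ b := fun h => hab.lt.ne (congrArg π h)
  have hmem : (a, b) ∉ (discordantPairs π (σ * τ)).map (τ.prodCongr τ).toEmbedding := by
    simp [τ, mem_map_equiv, hab.lt.not_gt]
  have h : discordantPairs π σ =
      cons (a, b) ((discordantPairs π (σ * τ)).map (τ.prodCongr τ).toEmbedding) hmem := by
    ext ⟨u, v⟩
    simp only [mem_cons, mem_map_equiv, mem_discordantPairs, prodCongr_symm, symm_swap,
      prodCongr_apply, Prod.map, Perm.mul_apply, swap_apply_self, τ, π.injective.map_swap]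
    by_cases hab' : (u, v) = (a, b)
    · obtain ⟨rfl, rfl⟩ := Prod.mk.inj hab'
      simp [hab.lt, hσ]
    by_cases hba : (u, v) = (b, a)
    · obtain ⟨rfl, rfl⟩ := Prod.mk.inj hba
      simp [hne.symm, hσ.not_gt]
    rw [swap_lt_swap_iff_of_covBy hab (by simpa using hab') (by simpa using hba)]
    simp [hab']
  rw [dKT_eq_card_discordantPairs, dKT_eq_card_discordantPairs, h, card_cons, card_map]

section ReversedPairs

variable {m : ℕ} {x y : Fin m → Fin n}

variable (x y) in
def reversedPairs (σ : Perm (Fin n)) : Finset (Fin m) :=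
  {j | σ (y j) < σ (x j)}

@[simp]
theorem mem_reversedPairs {σ : Perm (Fin n)} {j : Fin m} :
    j ∈ reversedPairs x y σ ↔ σ (y j) < σ (x j) := by
  simp [reversedPairs]

theorem card_reversedPairs_add_card_reversedPairs (hxy : ∀ j, x j ≠ y j) (σ : Perm (Fin n)) :
    #(reversedPairs x y σ) + #(reversedPairs y x σ) = m := by
  have h : reversedPairs y x σ = ({j | ¬σ (y j) < σ (x j)} : Finset (Fin m)) :=
    filter_congr fun j _ => by
      have := σ.injective.ne (hxy j)
      grind
  rw [h, reversedPairs, card_filter_add_card_filter_not, card_univ, Fintype.card_fin]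

theorem mem_reversedPairs_mul_swap (hxy : Function.Injective (Sum.elim x y))
    (σ : Perm (Fin n)) (j k : Fin m) :
    k ∈ reversedPairs x y (σ * swap (x j) (y j)) ↔ (k ∈ reversedPairs x y σ ↔ k ≠ j) := by
  obtain ⟨hx, hy, hxy⟩ := Sum.elim_injective.1 hxy
  by_cases hkj : k = j
  · subst hkj
    have := σ.injective.ne (hxy k k)
    simp only [mem_reversedPairs, Perm.mul_apply, swap_apply_left, swap_apply_right]
    grind
  · rw [mem_reversedPairs, mem_reversedPairs, Perm.mul_apply, Perm.mul_apply,
      swap_apply_of_ne_of_ne (hx.ne hkj) (hxy k j),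
      swap_apply_of_ne_of_ne (hxy j k).symm (hy.ne hkj)]
    simp [hkj]

theorem reversedPairs_mul_swap_of_mem (hxy : Function.Injective (Sum.elim x y))
    {σ : Perm (Fin n)} {j : Fin m} (hj : j ∈ reversedPairs x y σ) :
    reversedPairs x y (σ * swap (x j) (y j)) = (reversedPairs x y σ).erase j := by
  ext k
  rw [mem_reversedPairs_mul_swap hxy, mem_erase]
  grind

theorem reversedPairs_mul_swap_of_notMem (hxy : Function.Injective (Sum.elim x y))
    {σ : Perm (Fin n)} {j : Fin m} (hj : j ∉ reversedPairs x y σ) :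
    reversedPairs x y (σ * swap (x j) (y j)) = insert j (reversedPairs x y σ) := by
  ext k
  rw [mem_reversedPairs_mul_swap hxy, mem_insert]
  grind

variable {π : Perm (Fin n)} {φ : ℝ}

theorem sum_pow_dKT_filter_reversedPairs_insert (hxy : Function.Injective (Sum.elim x y))
    (hadj : ∀ j, π (x j) ⋖ π (y j)) {S : Finset (Fin m)} {j : Fin m} (hj : j ∉ S) :
    ∑ σ with reversedPairs x y σ = insert j S, φ ^ dKT π σ
      = φ * ∑ σ with reversedPairs x y σ = S, φ ^ dKT π σ := by
  rw [mul_sum]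
  refine sum_nbij' (· * swap (x j) (y j)) (· * swap (x j) (y j)) ?_ ?_
    (fun σ _ => mul_swap_mul_self _ _ σ) (fun σ _ => mul_swap_mul_self _ _ σ) ?_
  · intro σ hσ
    simp only [mem_filter, mem_univ, true_and] at hσ ⊢
    rw [reversedPairs_mul_swap_of_mem hxy (by simp [hσ]), hσ, erase_insert hj]
  · intro σ hσ
    simp only [mem_filter, mem_univ, true_and] at hσ ⊢
    rw [reversedPairs_mul_swap_of_notMem hxy (by simpa [hσ]), hσ]
  · intro σ hσ
    simp only [mem_filter, mem_univ, true_and] at hσ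
    have hrev : σ (y j) < σ (x j) := mem_reversedPairs.1 (by simp [hσ])
    rw [dKT_eq_dKT_mul_swap_add_one (hadj j) hrev, pow_succ, mul_comm]

theorem sum_pow_dKT_filter_reversedPairs_eq (hxy : Function.Injective (Sum.elim x y))
    (hadj : ∀ j, π (x j) ⋖ π (y j)) (S : Finset (Fin m)) :
    ∑ σ with reversedPairs x y σ = S, φ ^ dKT π σ
      = φ ^ #S * ∑ σ with reversedPairs x y σ = ∅, φ ^ dKT π σ := by
  induction S using Finset.induction_on with
  | empty => simp
  | insert j S hj ih =>
    rw [sum_pow_dKT_filter_reversedPairs_insert hxy hadj hj, ih, card_insert_of_notMem hj, pow_succ]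
    ring

theorem sum_mul_pow_dKT_eq_mul_sum_pow_card (hxy : Function.Injective (Sum.elim x y))
    (hadj : ∀ j, π (x j) ⋖ π (y j)) (F : Finset (Fin m) → ℝ) :
    ∑ σ, F (reversedPairs x y σ) * φ ^ dKT π σ
      = (∑ σ with reversedPairs x y σ = ∅, φ ^ dKT π σ) * ∑ S, F S * φ ^ #S := by
  rw [← sum_fiberwise univ (reversedPairs x y), mul_sum]
  refine sum_congr rfl fun S _ => ?_
  rw [sum_congr rfl fun σ hσ => by rw [(mem_filter.1 hσ).2], ← mul_sum,
    sum_pow_dKT_filter_reversedPairs_eq hxy hadj]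
  ring

theorem sum_mallows_card_reversedPairs_eq (hxy : Function.Injective (Sum.elim x y))
    (hadj : ∀ j, π (x j) ⋖ π (y j)) (hφ : 0 ≤ φ) (i : ℕ) :
    ∑ σ, (if #(reversedPairs x y σ) = i then mallows φ π σ else 0)
      = m.choose i * φ ^ i / (1 + φ) ^ m := by
  set B := ∑ σ with reversedPairs x y σ = ∅, φ ^ dKT π σ
  have hB : 0 < B := by
    have hπ : π ∈ ({σ | reversedPairs x y σ = ∅} : Finset (Perm (Fin n))) := by
      simp [eq_empty_iff_forall_notMem, fun j => (hadj j).lt.le]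
    have hπ₀ : dKT π π = 0 := by simp [dKT]
    have := single_le_sum (f := fun σ => φ ^ dKT π σ) (fun σ _ => pow_nonneg hφ _) hπ
    rw [hπ₀, pow_zero] at this
    linarith
  have hZ : ∑ σ, φ ^ dKT π σ = B * (1 + φ) ^ m := by
    have := Fin.sum_pow_mul_eq_add_pow (n := m) φ 1
    simp only [one_pow, mul_one] at this
    simpa [this, add_comm φ] using sum_mul_pow_dKT_eq_mul_sum_pow_card hxy hadj (φ := φ) fun _ => 1
  have hN : ∑ σ, (if #(reversedPairs x y σ) = i then 1 else 0) * φ ^ dKT π σ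
      = B * (m.choose i * φ ^ i) := by
    rw [sum_mul_pow_dKT_eq_mul_sum_pow_card hxy hadj fun S => if #S = i then 1 else 0]
    congr 1
    simp only [boole_mul]
    rw [← sum_filter, sum_congr rfl fun S hS => by rw [(mem_filter.1 hS).2], sum_const,
      ← powerset_univ, ← powersetCard_eq_filter, card_powersetCard, card_univ, Fintype.card_fin,
      nsmul_eq_mul]
  calc ∑ σ, (if #(reversedPairs x y σ) = i then mallows φ π σ else 0)
      = (∑ σ, (if #(reversedPairs x y σ) = i then 1 else 0) * φ ^ dKT π σ)
          / ∑ σ, φ ^ dKT π σ := by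
        rw [sum_div]
        refine sum_congr rfl fun σ _ => ?_
        split_ifs <;> simp [mallows]
    _ = m.choose i * φ ^ i / (1 + φ) ^ m := by
        rw [hN, hZ, mul_div_mul_left _ _ hB.ne']

theorem sum_mallows_card_reversedPairs_eq_choose_mul_pow_sub
    (hxy : Function.Injective (Sum.elim x y)) (hadj : ∀ j, π (y j) ⋖ π (x j)) (hφ : 0 ≤ φ)
    {i : ℕ} (hi : i ≤ m) :
    ∑ σ, (if #(reversedPairs x y σ) = i then mallows φ π σ else 0)
      = m.choose i * φ ^ (m - i) / (1 + φ) ^ m := by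
  have hyx : Function.Injective (Sum.elim y x) := by
    rw [← Sum.elim_swap]; exact hxy.comp Sum.swap_leftInverse.injective
  rw [← Nat.choose_symm hi, ← sum_mallows_card_reversedPairs_eq hyx hadj hφ]
  refine sum_congr rfl fun σ _ => if_congr ?_ rfl rfl
  have := card_reversedPairs_add_card_reversedPairs (x := x) (y := y)
    (fun j => hxy.ne Sum.inl_ne_inr) σ
  omega

end ReversedPairs

end

theorem disjoint_pair_reversal_general (n m : ℕ) (φ : ℝ) (hφ0 : 0 ≤ φ)
    (π₁ π₂ : Equiv.Perm (Fin n)) (x y : Fin m → Fin n)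
    (hdistinct : Function.Injective (Sum.elim x y : Fin m ⊕ Fin m → Fin n))
    (hconsec : ∀ i, ((π₁ (y i) : ℕ)) = (π₁ (x i) : ℕ) + 1)
    (hswap : ∀ i, π₂ (x i) = π₁ (y i) ∧ π₂ (y i) = π₁ (x i)) :
    ((1 : ℝ) / 2) *
        (∑ i ∈ Finset.range (m + 1), ((m.choose i : ℝ) * |φ ^ i - φ ^ (m - i)|)) /
        (1 + φ) ^ m
      ≤ dTV (mallows φ π₁) (mallows φ π₂) ∧
    ∀ i ≤ m,
      (∑ σ : Equiv.Perm (Fin n),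
          if (Finset.univ.filter fun j : Fin m => σ (y j) < σ (x j)).card = i
          then mallows φ π₁ σ else 0)
        = (m.choose i : ℝ) * φ ^ i / (1 + φ) ^ m := by
  have hadj₁ : ∀ j, π₁ (x j) ⋖ π₁ (y j) := fun j => Fin.covBy_of_val_eq_add_one (hconsec j)
  have hadj₂ : ∀ j, π₂ (y j) ⋖ π₂ (x j) := fun j => by
    rw [(hswap j).1, (hswap j).2]; exact hadj₁ j
  have hP := sum_mallows_card_reversedPairs_eq hdistinct hadj₁ hφ0
  have hQ := fun i (hi : i ≤ m) =>
    sum_mallows_card_reversedPairs_eq_choose_mul_pow_sub hdistinct hadj₂ hφ0 hi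
  refine ⟨?_, fun i _ => hP i⟩
  have hd : (0 : ℝ) < (1 + φ) ^ m := by positivity
  calc 1 / 2 * (∑ i ∈ range (m + 1), (m.choose i : ℝ) * |φ ^ i - φ ^ (m - i)|) / (1 + φ) ^ m
      = (∑ i ∈ range (m + 1),
          |m.choose i * φ ^ i / (1 + φ) ^ m - m.choose i * φ ^ (m - i) / (1 + φ) ^ m|) / 2 := by
        simp only [← sub_div, ← mul_sub, abs_div, abs_mul, Nat.abs_cast, abs_of_pos hd]
        rw [← sum_div]; ring
    _ = (∑ i ∈ range (m + 1),
          |(∑ σ, if #(reversedPairs x y σ) = i then mallows φ π₁ σ else 0)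
            - ∑ σ, if #(reversedPairs x y σ) = i then mallows φ π₂ σ else 0|) / 2 := by
        refine congrArg (· / 2) (sum_congr rfl fun i hi => ?_)
        rw [hP, hQ i (mem_range_succ_iff.1 hi)]
    _ ≤ dTV (mallows φ π₁) (mallows φ π₂) := by
        unfold dTV
        gcongr
        exact sum_abs_sum_ite_sub_sum_ite_le _ _ _ fun σ =>
          mem_range_succ_iff.2 (card_le_univ _ |>.trans_eq (Fintype.card_fin m))

/-- **From the proof of Theorem 6.2 of Liu–Moitra.** Let `0 ≤ φ ≤ 1` and let `π₂` be
obtained from `π₁` by reversing `m` pairwise disjoint pairs `(x i, y i)` of elements,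
each pair occupying two consecutive positions in `π₁` (and hence in `π₂`). Then
`d_TV(M(φ,π₁), M(φ,π₂)) ≥ (1/2)(Σ_{i=0}^m C(m,i)|φ^i - φ^{m-i}|)/(1+φ)^m`, and for each
`i ≤ m` the probability under `M(φ, π₁)` that a sample ranks exactly `i` of the `m`
pairs in reversed relative order is `C(m,i) φ^i/(1+φ)^m`. -/
theorem disjoint_pair_reversal (n m : ℕ) (φ : ℝ) (hφ0 : 0 ≤ φ) (hφ1 : φ ≤ 1)
    (π₁ π₂ : Equiv.Perm (Fin n)) (x y : Fin m → Fin n)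
    (hdistinct : Function.Injective (Sum.elim x y : Fin m ⊕ Fin m → Fin n))
    (hconsec : ∀ i, ((π₁ (y i) : ℕ)) = (π₁ (x i) : ℕ) + 1)
    (hswap : ∀ i, π₂ (x i) = π₁ (y i) ∧ π₂ (y i) = π₁ (x i))
    (hfix : ∀ z : Fin n, (∀ i, z ≠ x i ∧ z ≠ y i) → π₂ z = π₁ z) :
    ((1 : ℝ) / 2) *
        (∑ i ∈ Finset.range (m + 1), ((m.choose i : ℝ) * |φ ^ i - φ ^ (m - i)|)) /
        (1 + φ) ^ m
      ≤ dTV (mallows φ π₁) (mallows φ π₂) ∧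
    ∀ i ≤ m,
      (∑ σ : Equiv.Perm (Fin n),
          if (Finset.univ.filter fun j : Fin m => σ (y j) < σ (x j)).card = i
          then mallows φ π₁ σ else 0)
        = (m.choose i : ℝ) * φ ^ i / (1 + φ) ^ m :=
  disjoint_pair_reversal_general n m φ hφ0 π₁ π₂ x y hdistinct hconsec hswap
end
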